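/- arXiv:2405.00747 — 12 statements merged into one kernel-verified Lean document; each statement's English description precedes it below -/
import Mathlib

section
/- Let n ≥ 1 be an integer, η > 0 a real number, and let a, b : Fin n → ℝ be vectors with all entries strictly positive. Then ∑_{i} (a i / b i)^η * ( b i / (∑_{j} b j) − a i / (∑_{j} a j) ) ≤ 0. -/
/-- For `n ≥ 1`, `η > 0`, and vectors `a b : Fin n → ℝ` with strictly positive entries,
`∑ i, (a i / b i) ^ η * (b i / ∑ j, b j - a i / ∑ j, a j) ≤ 0`. -/
theorem spo_lemma_ineq (n : ℕ) (hn : 1 ≤ n) (η : ℝ) (hη : 0 < η)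
    (a b : Fin n → ℝ) (ha : ∀ i, 0 < a i) (hb : ∀ i, 0 < b i) :
    ∑ i, (a i / b i) ^ η * (b i / (∑ j, b j) - a i / (∑ j, a j)) ≤ 0 := by
  have hne : (Finset.univ : Finset (Fin n)).Nonempty := by
    exact Finset.univ_nonempty_iff.mpr (Fin.pos_iff_nonempty.mp hn)
  have hA : 0 < ∑ j, a j := Finset.sum_pos (fun i _ => ha i) hne
  have hB : 0 < ∑ j, b j := Finset.sum_pos (fun i _ => hb i) hne
  set A := ∑ j, a j
  set B := ∑ j, b j
  set f : Fin n → ℝ := fun i => (a i / b i) ^ η with hf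
  have key : ∑ i, f i * (A * b i - B * a i) ≤ 0 := by
    have h2 : (2:ℝ) * ∑ i, f i * (A * b i - B * a i)
        = ∑ i, ∑ j, (f i - f j) * (a j * b i - b j * a i) := by
      have expand : ∀ i, f i * (A * b i - B * a i)
          = ∑ j, f i * (a j * b i - b j * a i) := by
        intro i
        rw [← Finset.mul_sum, Finset.sum_sub_distrib, ← Finset.sum_mul, ← Finset.sum_mul]
      have swap : ∑ i, ∑ j, f i * (a j * b i - b j * a i)
          = ∑ i, ∑ j, f j * (a i * b j - b i * a j) := Finset.sum_comm
      calc (2:ℝ) * ∑ i, f i * (A * b i - B * a i)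
          = (∑ i, ∑ j, f i * (a j * b i - b j * a i))
            + (∑ i, ∑ j, f j * (a i * b j - b i * a j)) := by
            rw [two_mul, ← swap]
            congr 1 <;> exact Finset.sum_congr rfl (fun i _ => expand i)
        _ = ∑ i, ∑ j, (f i - f j) * (a j * b i - b j * a i) := by
            rw [← Finset.sum_add_distrib]
            apply Finset.sum_congr rfl; intro i _
            rw [← Finset.sum_add_distrib]
            apply Finset.sum_congr rfl; intro j _
            ring
    have hterm : ∀ i j : Fin n, (f i - f j) * (a j * b i - b j * a i) ≤ 0 := by
      intro i j
      rcases le_total (a i / b i) (a j / b j) with h | h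
      · apply mul_nonpos_of_nonpos_of_nonneg
        · simp only [hf, sub_nonpos]
          exact Real.rpow_le_rpow (le_of_lt (div_pos (ha i) (hb i))) h (le_of_lt hη)
        · have := (div_le_div_iff₀ (hb i) (hb j)).mp h
          linarith [this]
      · apply mul_nonpos_of_nonneg_of_nonpos
        · simp only [hf, sub_nonneg]
          exact Real.rpow_le_rpow (le_of_lt (div_pos (ha j) (hb j))) h (le_of_lt hη)
        · have := (div_le_div_iff₀ (hb j) (hb i)).mp h
          linarith [this]
    have hsum : ∑ i, ∑ j, (f i - f j) * (a j * b i - b j * a i) ≤ 0 :=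
      Finset.sum_nonpos fun i _ => Finset.sum_nonpos fun j _ => hterm i j
    linarith [h2 ▸ hsum]
  have heq : ∑ i, f i * (b i / B - a i / A)
      = (∑ i, f i * (A * b i - B * a i)) / (A * B) := by
    rw [Finset.sum_div]
    apply Finset.sum_congr rfl
    intro i _
    field_simp
  calc ∑ i, f i * (b i / B - a i / A)
      = (∑ i, f i * (A * b i - B * a i)) / (A * B) := heq
    _ ≤ 0 := div_nonpos_of_nonpos_of_nonneg key (le_of_lt (mul_pos hA hB))
end

section
/- Let n ≥ 1 be an integer, η > 0 a real number, and let a, b : Fin n → ℝ be vectors with all entries strictly positive. If ∑_{i} (a i / b i)^η * ( b i / (∑_{j} b j) − a i / (∑_{j} a j) ) = 0, then there exists a real c > 0 such that a i = c * b i for every i. -/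
/-!
Put `r i = a i / b i` and `c = (∑ a) / (∑ b)`. Multiplying the hypothesis by `-∑ a` turns it into
`∑ b i * r i ^ η * (r i - c) = 0`, while `∑ b i * (r i - c) = 0` by the choice of `c`. Subtracting
`c ^ η` times the second sum from the first gives `∑ b i * (r i ^ η - c ^ η) * (r i - c) = 0`, a sum
of nonnegative terms, since `x ↦ x ^ η` is increasing. Strict monotonicity forces every `r i = c`.
-/

open Finset

theorem StrictMonoOn.sub_mul_sub_pos {R : Type*} [CommRing R] [LinearOrder R]
    [IsStrictOrderedRing R] {f : R → R} {D : Set R} (hf : StrictMonoOn f D) {x y : R}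
    (hx : x ∈ D) (hy : y ∈ D) (hxy : x ≠ y) : 0 < (f x - f y) * (x - y) := by
  rcases hxy.lt_or_gt with hlt | hgt
  · exact mul_pos_of_neg_of_neg (sub_neg.2 (hf hx hy hlt)) (sub_neg.2 hlt)
  · exact mul_pos (sub_pos.2 (hf hy hx hgt)) (sub_pos.2 hgt)

theorem eq_of_sum_mul_sub_eq_zero_of_strictMonoOn {ι R : Type*} [CommRing R] [LinearOrder R]
    [IsStrictOrderedRing R] {s : Finset ι} {f : R → R} {D : Set R} (hf : StrictMonoOn f D)
    {w r : ι → R} {c : R} (hw : ∀ i ∈ s, 0 < w i) (hr : ∀ i ∈ s, r i ∈ D) (hc : c ∈ D)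
    (hmean : ∑ i ∈ s, w i * (r i - c) = 0) (hf0 : ∑ i ∈ s, w i * f (r i) * (r i - c) = 0) :
    ∀ i ∈ s, r i = c := by
  have hsum : ∑ i ∈ s, w i * ((f (r i) - f c) * (r i - c)) = 0 := by
    calc ∑ i ∈ s, w i * ((f (r i) - f c) * (r i - c))
        = ∑ i ∈ s, w i * f (r i) * (r i - c) - f c * ∑ i ∈ s, w i * (r i - c) := by
          rw [mul_sum, ← sum_sub_distrib]
          exact sum_congr rfl fun i _ => by ring
      _ = 0 := by rw [hmean, hf0, mul_zero, sub_zero]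
  have hnonneg : ∀ i ∈ s, 0 ≤ w i * ((f (r i) - f c) * (r i - c)) := by
    intro i hi
    rcases eq_or_ne (r i) c with heq | hne
    · simp [heq]
    · exact (mul_pos (hw i hi) (hf.sub_mul_sub_pos (hr i hi) hc hne)).le
  intro i hi
  by_contra hne
  exact (mul_pos (hw i hi) (hf.sub_mul_sub_pos (hr i hi) hc hne)).ne'
    ((sum_eq_zero_iff_of_nonneg hnonneg).1 hsum i hi)

/-- Equality case of the SPO lemma inequality: if
`∑ i, (a i / b i) ^ η * (b i / ∑ j, b j - a i / ∑ j, a j) = 0`, then `a = c • b`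
for some `c > 0`. -/
theorem spo_lemma_eq_case (n : ℕ) (hn : 1 ≤ n) (η : ℝ) (hη : 0 < η)
    (a b : Fin n → ℝ) (ha : ∀ i, 0 < a i) (hb : ∀ i, 0 < b i)
    (heq : ∑ i, (a i / b i) ^ η * (b i / (∑ j, b j) - a i / (∑ j, a j)) = 0) :
    ∃ c : ℝ, 0 < c ∧ ∀ i, a i = c * b i := by
  have hne : (univ : Finset (Fin n)).Nonempty := ⟨⟨0, hn⟩, mem_univ _⟩
  have hSa : 0 < ∑ j, a j := sum_pos (fun i _ => ha i) hne
  have hSb : 0 < ∑ j, b j := sum_pos (fun i _ => hb i) hne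
  set c := (∑ j, a j) / ∑ j, b j
  have hterm : ∀ i,
      b i * (a i / b i - c) = -(∑ j, a j) * (b i / (∑ j, b j) - a i / ∑ j, a j) := by
    intro i
    simp only [c]
    field_simp [(hb i).ne']
    ring
  have hmean : ∑ i, b i * (a i / b i - c) = 0 := by
    simp only [hterm, ← mul_sum, sum_sub_distrib, ← sum_div, div_self hSa.ne', div_self hSb.ne',
      sub_self, mul_zero]
  have hf0 : ∑ i, b i * (a i / b i) ^ η * (a i / b i - c) = 0 := by
    calc ∑ i, b i * (a i / b i) ^ η * (a i / b i - c)
        = -(∑ j, a j) * ∑ i, (a i / b i) ^ η * (b i / (∑ j, b j) - a i / ∑ j, a j) := by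
          rw [mul_sum]
          exact sum_congr rfl fun i _ => by rw [mul_right_comm, hterm]; ring
      _ = 0 := by rw [heq, mul_zero]
  have hr := eq_of_sum_mul_sub_eq_zero_of_strictMonoOn
    (Real.strictMonoOn_rpow_Ici_of_exponent_pos hη) (fun i _ => hb i)
    (fun i _ => (div_pos (ha i) (hb i)).le) (div_pos hSa hSb).le hmean hf0
  exact ⟨c, div_pos hSa hSb, fun i => (div_eq_iff (hb i).ne').1 (hr i (mem_univ i))⟩
end

section
/- Let Y be a finite nonempty type, let π, ρ : Y → ℝ have strictly positive values, let α ≥ 0 and z > 0 be reals, and define π* : Y → ℝ by π*(y) = z * ρ(y)^α. Let h : Y × Y → ℝ satisfy h(y, y') = h(y', y) for all y, y'. Then ∑_{y} (π(y) − ρ(y)) * ∑_{y'} h(y, y') * π(y') * ( π(y')^α * π*(y) − π(y)^α * π*(y') ) = −(z/2) * ∑_{y} ∑_{y'} h(y, y') * (π(y) * π(y'))^{1+α} * ( (ρ(y)/π(y))^α − (ρ(y')/π(y'))^α ) * ( ρ(y)/π(y) − ρ(y')/π(y') ). -/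
/-- The symmetrization identity used in the proof of SPO's Theorem 1:
with `πstar y = z * ρ y ^ α` and `h` symmetric,
`∑ y, (π y - ρ y) * ∑ y', h (y,y') * π y' * (π y' ^ α * πstar y - π y ^ α * πstar y')`
equals
`-(z/2) * ∑ y, ∑ y', h (y,y') * (π y * π y') ^ (1+α) *
  ((ρ y / π y) ^ α - (ρ y' / π y') ^ α) * (ρ y / π y - ρ y' / π y')`. -/
theorem spo_symmetrization_identity (Y : Type*) [Fintype Y] [Nonempty Y]
    (π ρ : Y → ℝ) (hπ : ∀ y, 0 < π y) (hρ : ∀ y, 0 < ρ y)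
    (α : ℝ) (hα : 0 ≤ α) (z : ℝ) (hz : 0 < z)
    (πstar : Y → ℝ) (hπstar : ∀ y, πstar y = z * (ρ y) ^ α)
    (h : Y × Y → ℝ) (hsym : ∀ y y', h (y, y') = h (y', y)) :
    ∑ y, (π y - ρ y) *
        ∑ y', h (y, y') * π y' * ((π y') ^ α * πstar y - (π y) ^ α * πstar y')
      = -(z / 2) *
        ∑ y, ∑ y', h (y, y') * (π y * π y') ^ (1 + α) *
          ((ρ y / π y) ^ α - (ρ y' / π y') ^ α) * (ρ y / π y - ρ y' / π y') := by
  classical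
  -- pointwise key identity
  have key : ∀ y y' : Y,
      (π y - ρ y) * (h (y, y') * π y' * ((π y') ^ α * πstar y - (π y) ^ α * πstar y'))
      + (π y' - ρ y') * (h (y, y') * π y * ((π y) ^ α * πstar y' - (π y') ^ α * πstar y))
      = -z * (h (y, y') * (π y * π y') ^ (1 + α) *
          ((ρ y / π y) ^ α - (ρ y' / π y') ^ α) * (ρ y / π y - ρ y' / π y')) := by
    intro y y'
    have ha := hπ y
    have hb := hπ y'
    have haα : (0:ℝ) < (π y) ^ α := Real.rpow_pos_of_pos ha α
    have hbα : (0:ℝ) < (π y') ^ α := Real.rpow_pos_of_pos hb α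
    have h1 : (π y * π y') ^ (1 + α) = (π y * (π y) ^ α) * (π y' * (π y') ^ α) := by
      rw [Real.mul_rpow ha.le hb.le, Real.rpow_add ha, Real.rpow_add hb, Real.rpow_one, Real.rpow_one]
    have h2 : (ρ y / π y) ^ α = (ρ y) ^ α / (π y) ^ α :=
      Real.div_rpow (hρ y).le ha.le α
    have h3 : (ρ y' / π y') ^ α = (ρ y') ^ α / (π y') ^ α :=
      Real.div_rpow (hρ y').le hb.le α
    rw [hπstar, hπstar, h1, h2, h3]
    field_simp
    ring
  -- the LHS as a double sum
  have L1 : ∑ y, (π y - ρ y) *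
        ∑ y', h (y, y') * π y' * ((π y') ^ α * πstar y - (π y) ^ α * πstar y')
      = ∑ y, ∑ y', (π y - ρ y) *
          (h (y, y') * π y' * ((π y') ^ α * πstar y - (π y) ^ α * πstar y')) := by
    simp [Finset.mul_sum]
  -- the swapped version equals the same thing
  have L2 : (∑ y : Y, ∑ y' : Y, (π y' - ρ y') *
          (h (y, y') * π y * ((π y) ^ α * πstar y' - (π y') ^ α * πstar y)))
      = ∑ y, ∑ y', (π y - ρ y) *
          (h (y, y') * π y' * ((π y') ^ α * πstar y - (π y) ^ α * πstar y')) := by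
    rw [Finset.sum_comm]
    refine Finset.sum_congr rfl fun y _ => Finset.sum_congr rfl fun y' _ => ?_
    rw [hsym]
  have hsum : (2:ℝ) * ∑ y, ∑ y', (π y - ρ y) *
          (h (y, y') * π y' * ((π y') ^ α * πstar y - (π y) ^ α * πstar y'))
      = -z * ∑ y, ∑ y', h (y, y') * (π y * π y') ^ (1 + α) *
          ((ρ y / π y) ^ α - (ρ y' / π y') ^ α) * (ρ y / π y - ρ y' / π y') := by
    rw [two_mul]
    nth_rewrite 2 [← L2]
    rw [← Finset.sum_add_distrib, Finset.mul_sum]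
    refine Finset.sum_congr rfl fun y _ => ?_
    rw [← Finset.sum_add_distrib, Finset.mul_sum]
    exact Finset.sum_congr rfl fun y' _ => key y y'
  rw [L1]
  linarith [hsum]
end

section
/- Let Y be a finite nonempty type, r : Y → ℝ, and α > 0. Define π*(y) = exp(r(y)) / ∑_{y'} exp(r(y')) and ρ(y) = exp(r(y)/α) / ∑_{y'} exp(r(y')/α). Let h : Y × Y → ℝ satisfy h(y, y') = h(y', y) > 0 for all y, y'. Then for every π : Y → ℝ with π(y) > 0 for all y, ∑_{y} π(y) = 1, and π ≠ ρ, it holds that ∑_{y} (π(y) − ρ(y)) * ∑_{y'} h(y, y') * π(y') * ( π(y')^α * π*(y) − π(y)^α * π*(y') ) < 0. -/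
private lemma spo_pt_le (α a b u v : ℝ) (hα : 0 < α) (hab : a - b = α * (u - v)) :
    (Real.exp a - Real.exp b) * (Real.exp v - Real.exp u) ≤ 0 := by
  rcases le_total a b with hle | hle
  · have huv : u ≤ v := by nlinarith
    have h1 := Real.exp_le_exp.mpr hle
    have h2 := Real.exp_le_exp.mpr huv
    nlinarith
  · have huv : v ≤ u := by nlinarith
    have h1 := Real.exp_le_exp.mpr hle
    have h2 := Real.exp_le_exp.mpr huv
    nlinarith

private lemma spo_pt_lt (α a b u v : ℝ) (hα : 0 < α) (hab : a - b = α * (u - v))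
    (hne : a ≠ b) :
    (Real.exp a - Real.exp b) * (Real.exp v - Real.exp u) < 0 := by
  rcases hne.lt_or_gt with hlt | hlt
  · have huv : u < v := by nlinarith
    have h1 := Real.exp_lt_exp.mpr hlt
    have h2 := Real.exp_lt_exp.mpr huv
    nlinarith
  · have huv : v < u := by nlinarith
    have h1 := Real.exp_lt_exp.mpr hlt
    have h2 := Real.exp_lt_exp.mpr huv
    nlinarith

/-- Core descent inequality of SPO (Theorems 1 and 2): for every `π` in the relative
interior of the probability simplex with `π ≠ ρ = softmax (r/α)`, the quantity
`∑ y, (π y - ρ y) * ∑ y', h (y,y') * π y' * (π y' ^ α * πstar y - π y ^ α * πstar y')`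
is strictly negative, where `πstar = softmax r`. -/
theorem spo_descent_inequality (Y : Type*) [Fintype Y] [Nonempty Y]
    (r : Y → ℝ) (α : ℝ) (hα : 0 < α)
    (πstar ρ : Y → ℝ)
    (hπstar : ∀ y, πstar y = Real.exp (r y) / ∑ y', Real.exp (r y'))
    (hρ : ∀ y, ρ y = Real.exp (r y / α) / ∑ y', Real.exp (r y' / α))
    (h : Y × Y → ℝ) (hsym : ∀ y y', h (y, y') = h (y', y))
    (hpos : ∀ y y', 0 < h (y, y'))
    (π : Y → ℝ) (hπ : ∀ y, 0 < π y) (hsum : ∑ y, π y = 1) (hne : π ≠ ρ) :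
    ∑ y, (π y - ρ y) *
        ∑ y', h (y, y') * π y' * ((π y') ^ α * πstar y - (π y) ^ α * πstar y') < 0 := by
  classical
  have hα0 : α ≠ 0 := ne_of_gt hα
  have hS : (0:ℝ) < ∑ y', Real.exp (r y') :=
    Finset.sum_pos (fun y _ => Real.exp_pos _) Finset.univ_nonempty
  have hT : (0:ℝ) < ∑ y', Real.exp (r y' / α) :=
    Finset.sum_pos (fun y _ => Real.exp_pos _) Finset.univ_nonempty
  set S := ∑ y', Real.exp (r y') with hSdef
  set T := ∑ y', Real.exp (r y' / α) with hTdef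
  set a : Y → Y → ℝ := fun y y' => Real.log (π y') * α + r y with ha
  set u : Y → Y → ℝ := fun y y' => Real.log (π y') + r y / α with hu
  have hA : ∀ y y', (π y') ^ α * πstar y - (π y) ^ α * πstar y'
      = (Real.exp (a y y') - Real.exp (a y' y)) / S := by
    intro y y'
    simp only [ha]
    rw [Real.exp_add, Real.exp_add, hπstar y, hπstar y',
      Real.rpow_def_of_pos (hπ y'), Real.rpow_def_of_pos (hπ y)]
    ring
  have hB : ∀ y y', π y * ρ y' - π y' * ρ y
      = (Real.exp (u y' y) - Real.exp (u y y')) / T := by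
    intro y y'
    simp only [hu]
    rw [Real.exp_add, Real.exp_add, Real.exp_log (hπ y), Real.exp_log (hπ y'), hρ y, hρ y']
    ring
  have hab : ∀ y y', a y y' - a y' y = α * (u y y' - u y' y) := by
    intro y y'
    simp only [ha, hu]
    field_simp
  have key : ∀ y y',
      (π y - ρ y) * (h (y, y') * π y' * ((π y') ^ α * πstar y - (π y) ^ α * πstar y'))
      + (π y' - ρ y') * (h (y', y) * π y * ((π y) ^ α * πstar y' - (π y') ^ α * πstar y))
      = h (y, y') * ((Real.exp (a y y') - Real.exp (a y' y))
          * (Real.exp (u y' y) - Real.exp (u y y'))) / (S * T) := by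
    intro y y'
    rw [hA y y', hA y' y, hsym y' y]
    have e3 := hB y y'
    linear_combination (h (y, y') * (Real.exp (a y y') - Real.exp (a y' y)) / S) * e3
  have hle : ∀ y y', h (y, y') * ((Real.exp (a y y') - Real.exp (a y' y))
      * (Real.exp (u y' y) - Real.exp (u y y'))) / (S * T) ≤ 0 := by
    intro y y'
    apply div_nonpos_of_nonpos_of_nonneg
    · exact mul_nonpos_of_nonneg_of_nonpos (hpos y y').le
        (spo_pt_le α _ _ _ _ hα (hab y y'))
    · positivity
  have hltp : ∀ y y', a y y' ≠ a y' y →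
      h (y, y') * ((Real.exp (a y y') - Real.exp (a y' y))
      * (Real.exp (u y' y) - Real.exp (u y y'))) / (S * T) < 0 := by
    intro y y' hne'
    apply div_neg_of_neg_of_pos
    · exact mul_neg_of_pos_of_neg (hpos y y')
        (spo_pt_lt α _ _ _ _ hα (hab y y') hne')
    · positivity
  -- existence of a strict pair
  have hex : ∃ y y', a y y' ≠ a y' y := by
    by_contra hcon
    push_neg at hcon
    simp only [ha] at hcon
    apply hne
    obtain ⟨y₀⟩ := ‹Nonempty Y›
    set c := π y₀ / Real.exp (r y₀ / α) with hc
    have hπeq : ∀ y, π y = c * Real.exp (r y / α) := by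
      intro y
      have h1 := hcon y y₀
      have h2 : Real.log (π y) = Real.log (π y₀) + (r y / α - r y₀ / α) := by
        field_simp at h1 ⊢
        linarith
      have h3 := congrArg Real.exp h2
      rw [Real.exp_log (hπ y), Real.exp_add, Real.exp_log (hπ y₀), Real.exp_sub] at h3
      rw [h3, hc]
      ring
    have hcT : c * T = 1 := by
      rw [← hsum, hTdef, Finset.mul_sum]
      exact Finset.sum_congr rfl fun y _ => (hπeq y).symm
    have hceq : c = 1 / T := by
      field_simp
      linarith [hcT]
    funext y
    rw [hπeq y, hρ y, hceq]
    ring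
  -- assemble
  let Q : Y × Y → ℝ := fun p => (π p.1 - ρ p.1) *
      (h (p.1, p.2) * π p.2 * ((π p.2) ^ α * πstar p.1 - (π p.1) ^ α * πstar p.2))
  have step1 : (∑ y, (π y - ρ y) *
        ∑ y', h (y, y') * π y' * ((π y') ^ α * πstar y - (π y) ^ α * πstar y'))
      = ∑ p : Y × Y, Q p := by
    rw [Fintype.sum_prod_type]
    exact Finset.sum_congr rfl fun y _ => Finset.mul_sum _ _ _
  have hswap : ∑ p : Y × Y, Q (p.2, p.1) = ∑ p : Y × Y, Q p :=
    Fintype.sum_equiv (Equiv.prodComm Y Y) _ _ (fun p => rfl)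
  have keyQ : ∀ p : Y × Y, Q p + Q (p.2, p.1)
      = h (p.1, p.2) * ((Real.exp (a p.1 p.2) - Real.exp (a p.2 p.1))
          * (Real.exp (u p.2 p.1) - Real.exp (u p.1 p.2))) / (S * T) :=
    fun p => key p.1 p.2
  have h2 : ∑ p : Y × Y, (Q p + Q (p.2, p.1)) < 0 := by
    obtain ⟨y₀, y₁, hne01⟩ := hex
    have := Finset.sum_lt_sum (s := Finset.univ)
      (f := fun p : Y × Y => Q p + Q (p.2, p.1)) (g := fun _ => (0:ℝ))
      (fun p _ => by
        show Q p + Q (p.2, p.1) ≤ 0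
        rw [keyQ p]; exact hle p.1 p.2)
      ⟨(y₀, y₁), Finset.mem_univ _, by
        show Q (y₀, y₁) + Q ((y₀, y₁).2, (y₀, y₁).1) < 0
        rw [keyQ (y₀, y₁)]; exact hltp y₀ y₁ hne01⟩
    simpa using this
  have h3 : ∑ p : Y × Y, (Q p + Q (p.2, p.1)) = 2 * ∑ p : Y × Y, Q p := by
    rw [Finset.sum_add_distrib, hswap]
    ring
  rw [step1]
  linarith [h2, h3.symm.trans_lt h2]
end

section
/- Let Y be a finite nonempty type, r : Y → ℝ, and α > 0. Let D : Y × Y → ℝ satisfy D(y₁, y₂) > 0 for all y₁, y₂ and the Bradley–Terry consistency condition D(y₁, y₂) * exp(r(y₂)) = D(y₂, y₁) * exp(r(y₁)) for all y₁, y₂. Define the preference loss L(π) = −(1/α) * ∑_{(y₁, y₂) ∈ Y × Y} D(y₁, y₂) * log( π(y₁)^α / (π(y₁)^α + π(y₂)^α) ), and let ρ(y) = exp(r(y)/α) / ∑_{y'} exp(r(y')/α). Then for every π : Y → ℝ with π(y) > 0 for all y, ∑_{y} π(y) = 1, and π ≠ ρ, it holds that L(π) > L(ρ). -/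
/-!
Write `σ_p (y₁, y₂) = p y₁ / (p y₁ + p y₂)` (`bradleyTerryProb p`) for the Bradley–Terry
probability of positive weights `p`, so that the loss is `-(1/α) ∑ D log σ_{π^α}`. Since `ρ^α` is
proportional to `E = exp ∘ r`, the loss at `ρ` involves `σ_E`, and Bradley–Terry consistency says
exactly `D = S σ_E` with the symmetric weight `S (y₁, y₂) = D (y₁, y₂) + D (y₂, y₁)`. Symmetry of
`S` and `σ_p + σ_p ∘ swap = 1` give `∑ S σ_p = (∑ S) / 2` for every `p`, hence
`∑ D (σ_{π^α} / σ_E) = ∑ D`, and `log x ≤ x - 1` yields `∑ D log σ_{π^α} ≤ ∑ D log σ_E`, strictly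
unless `σ_{π^α} = σ_E`. Finally `σ_p` determines `p` up to scaling, so on the simplex
`σ_{π^α} = σ_{ρ^α}` forces `π = ρ`.
-/

open Finset

theorem sum_mul_log_lt_sum_mul_log {ι : Type*} [Fintype ι] {w A B : ι → ℝ} (hw : ∀ i, 0 < w i) (hA : ∀ i, 0 < A i)
    (hB : ∀ i, 0 < B i) (hsum : ∑ i, w i * (A i / B i) ≤ ∑ i, w i) (hne : A ≠ B) :
    ∑ i, w i * Real.log (A i) < ∑ i, w i * Real.log (B i) := by
  have hterm : ∀ i, w i * Real.log (A i) - w i * Real.log (B i)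
      = w i * Real.log (A i / B i) := fun i => by
    rw [Real.log_div (hA i).ne' (hB i).ne']; ring
  obtain ⟨j, hj⟩ := Function.ne_iff.mp hne
  have hlt : ∑ i, (w i * Real.log (A i) - w i * Real.log (B i))
      < ∑ i, (w i * (A i / B i) - w i) := by
    refine sum_lt_sum (fun i _ => ?_) ⟨j, mem_univ j, ?_⟩ <;> rw [hterm, ← mul_sub_one]
    · exact mul_le_mul_of_nonneg_left (Real.log_le_sub_one_of_pos (div_pos (hA i) (hB i)))
        (hw i).le
    · refine mul_lt_mul_of_pos_left (Real.log_lt_sub_one_of_pos (div_pos (hA j) (hB j)) ?_) (hw j)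
      rwa [Ne, div_eq_one_iff_eq (hB j).ne']
  rw [sum_sub_distrib, sum_sub_distrib] at hlt
  linarith

theorem eq_of_forall_mul_eq_mul_of_sum_eq_one {ι R : Type*} [Fintype ι] [CommSemiring R]
    {p q : ι → R}
    (h : ∀ i j, p i * q j = q i * p j) (hp : ∑ i, p i = 1) (hq : ∑ i, q i = 1) : p = q := by
  funext i
  simpa [← mul_sum, hp, hq] using sum_congr rfl fun j (_ : j ∈ univ) => h i j

section BradleyTerry

variable {Y : Type*}

noncomputable def bradleyTerryProb (p : Y → ℝ) (yy : Y × Y) : ℝ :=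
  p yy.1 / (p yy.1 + p yy.2)

variable {p : Y → ℝ}

theorem bradleyTerryProb_pos (hp : ∀ y, 0 < p y) (yy : Y × Y) : 0 < bradleyTerryProb p yy :=
  div_pos (hp _) (add_pos (hp _) (hp _))

theorem bradleyTerryProb_add_swap (hp : ∀ y, 0 < p y) (yy : Y × Y) :
    bradleyTerryProb p yy + bradleyTerryProb p yy.swap = 1 := by
  rw [bradleyTerryProb, bradleyTerryProb, Prod.fst_swap, Prod.snd_swap, add_comm (p yy.2),
    ← add_div, div_self (add_pos (hp _) (hp _)).ne']

theorem bradleyTerryProb_smul {c : ℝ} (hc : c ≠ 0) :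
    bradleyTerryProb (c • p) = bradleyTerryProb p := by
  funext yy
  simp only [bradleyTerryProb, Pi.smul_apply, smul_eq_mul, ← mul_add, mul_div_mul_left _ _ hc]

theorem bradleyTerryProb_eq_iff {q : Y → ℝ} (hp : ∀ y, 0 < p y) (hq : ∀ y, 0 < q y)
    (yy : Y × Y) :
    bradleyTerryProb p yy = bradleyTerryProb q yy ↔ p yy.1 * q yy.2 = q yy.1 * p yy.2 := by
  rw [bradleyTerryProb, bradleyTerryProb,
    div_eq_div_iff (add_pos (hp _) (hp _)).ne' (add_pos (hq _) (hq _)).ne']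
  constructor <;> intro h <;> linarith

theorem eq_of_bradleyTerryProb_rpow_eq [Fintype Y] {q : Y → ℝ} {α : ℝ} (hα : α ≠ 0)
    (hp : ∀ y, 0 < p y) (hq : ∀ y, 0 < q y) (hp1 : ∑ y, p y = 1) (hq1 : ∑ y, q y = 1)
    (h : bradleyTerryProb (fun y => p y ^ α) = bradleyTerryProb (fun y => q y ^ α)) : p = q := by
  refine eq_of_forall_mul_eq_mul_of_sum_eq_one (fun y₁ y₂ => ?_) hp1 hq1
  have hpq := (bradleyTerryProb_eq_iff (fun y => Real.rpow_pos_of_pos (hp y) α)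
    (fun y => Real.rpow_pos_of_pos (hq y) α) (y₁, y₂)).mp (congrFun h (y₁, y₂))
  rwa [← Real.mul_rpow (hp _).le (hq _).le, ← Real.mul_rpow (hq _).le (hp _).le,
    Real.rpow_left_inj (by positivity [hp y₁, hq y₂]) (by positivity [hq y₁, hp y₂]) hα] at hpq

theorem sum_mul_bradleyTerryProb_of_symm [Fintype Y] {S : Y × Y → ℝ}
    (hS : ∀ yy, S yy.swap = S yy) (hp : ∀ y, 0 < p y) :
    ∑ yy, S yy * bradleyTerryProb p yy = (∑ yy, S yy) / 2 := by
  have hswap : ∑ yy, S yy * bradleyTerryProb p yy = ∑ yy, S yy * bradleyTerryProb p yy.swap :=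
    Fintype.sum_equiv (Equiv.prodComm Y Y) _ _ fun yy => by
      rw [Equiv.prodComm_apply, hS, Prod.swap_swap]
  have htotal : ∑ yy, S yy * bradleyTerryProb p yy + ∑ yy, S yy * bradleyTerryProb p yy.swap
      = ∑ yy, S yy := by
    simp only [← sum_add_distrib, ← mul_add, bradleyTerryProb_add_swap hp, mul_one]
  linarith

theorem eq_add_swap_mul_bradleyTerryProb {D : Y × Y → ℝ} {E : Y → ℝ} (hE : ∀ y, 0 < E y)
    (hBT : ∀ y₁ y₂, D (y₁, y₂) * E y₂ = D (y₂, y₁) * E y₁) (yy : Y × Y) :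
    D yy = (D yy + D yy.swap) * bradleyTerryProb E yy := by
  obtain ⟨y₁, y₂⟩ := yy
  have hsum : E y₁ + E y₂ ≠ 0 := (add_pos (hE _) (hE _)).ne'
  rw [bradleyTerryProb, Prod.swap_prod_mk, mul_div_assoc', eq_div_iff hsum]
  linear_combination hBT y₁ y₂

theorem sum_mul_log_bradleyTerryProb_lt [Fintype Y] {D : Y × Y → ℝ} {E a : Y → ℝ}
    (hD : ∀ yy, 0 < D yy) (hE : ∀ y, 0 < E y)
    (hBT : ∀ y₁ y₂, D (y₁, y₂) * E y₂ = D (y₂, y₁) * E y₁) (ha : ∀ y, 0 < a y)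
    (hne : bradleyTerryProb a ≠ bradleyTerryProb E) :
    ∑ yy, D yy * Real.log (bradleyTerryProb a yy)
      < ∑ yy, D yy * Real.log (bradleyTerryProb E yy) := by
  set S : Y × Y → ℝ := fun yy => D yy + D yy.swap
  have hS : ∀ yy, S yy.swap = S yy := fun yy => by simp only [S, Prod.swap_swap, add_comm]
  have hD_eq : ∀ yy, D yy = S yy * bradleyTerryProb E yy :=
    eq_add_swap_mul_bradleyTerryProb hE hBT
  refine sum_mul_log_lt_sum_mul_log hD (bradleyTerryProb_pos ha) (bradleyTerryProb_pos hE)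
    (le_of_eq ?_) hne
  calc ∑ yy, D yy * (bradleyTerryProb a yy / bradleyTerryProb E yy)
      = ∑ yy, S yy * bradleyTerryProb a yy := sum_congr rfl fun yy _ => by
        rw [hD_eq, mul_assoc, mul_div_cancel₀ _ (bradleyTerryProb_pos hE yy).ne']
    _ = (∑ yy, S yy) / 2 := sum_mul_bradleyTerryProb_of_symm hS ha
    _ = ∑ yy, S yy * bradleyTerryProb E yy := (sum_mul_bradleyTerryProb_of_symm hS hE).symm
    _ = ∑ yy, D yy := sum_congr rfl fun yy _ => (hD_eq yy).symm

end BradleyTerry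

theorem rpow_softmax_eq_smul_exp {Y : Type*} [Fintype Y] (r : Y → ℝ) {α : ℝ} (hα : α ≠ 0) :
    (fun y => (Real.exp (r y / α) / ∑ y', Real.exp (r y' / α)) ^ α)
      = ((∑ y', Real.exp (r y' / α)) ^ α)⁻¹ • fun y => Real.exp (r y) := by
  funext y
  rw [Real.div_rpow (Real.exp_pos _).le (sum_nonneg fun _ _ => (Real.exp_pos _).le),
    ← Real.exp_mul, div_mul_cancel₀ _ hα, Pi.smul_apply, smul_eq_mul, inv_mul_eq_div]

/-- Unique-minimizer claim of SPO's Theorem 1 (tabular model, single context):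
under Bradley–Terry consistency of `D` with rewards `r`, the preference loss
`L π = -(1/α) * ∑ (y₁,y₂), D (y₁,y₂) * log (π y₁ ^ α / (π y₁ ^ α + π y₂ ^ α))`
is strictly larger at any point `π` of the relative interior of the probability
simplex other than `ρ = softmax (r/α)`. -/
theorem spo_unique_minimizer (Y : Type*) [Fintype Y] [Nonempty Y]
    (r : Y → ℝ) (α : ℝ) (hα : 0 < α)
    (D : Y × Y → ℝ) (hD : ∀ y₁ y₂, 0 < D (y₁, y₂))
    (hBT : ∀ y₁ y₂, D (y₁, y₂) * Real.exp (r y₂) = D (y₂, y₁) * Real.exp (r y₁))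
    (L : (Y → ℝ) → ℝ)
    (hL : ∀ p : Y → ℝ, L p = -(1 / α) *
      ∑ yy : Y × Y, D yy * Real.log ((p yy.1) ^ α / ((p yy.1) ^ α + (p yy.2) ^ α)))
    (ρ : Y → ℝ) (hρ : ∀ y, ρ y = Real.exp (r y / α) / ∑ y', Real.exp (r y' / α))
    (π : Y → ℝ) (hπ : ∀ y, 0 < π y) (hsum : ∑ y, π y = 1) (hne : π ≠ ρ) :
    L ρ < L π := by
  have hZ : 0 < ∑ y', Real.exp (r y' / α) := sum_pos (fun _ _ => Real.exp_pos _) univ_nonempty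
  have hρpos : ∀ y, 0 < ρ y := fun y => by rw [hρ]; positivity
  have hρsum : ∑ y, ρ y = 1 := by simp only [hρ, ← sum_div, div_self hZ.ne']
  have hσρ : bradleyTerryProb (fun y => ρ y ^ α) = bradleyTerryProb fun y => Real.exp (r y) := by
    simp only [hρ]
    rw [rpow_softmax_eq_smul_exp r hα.ne', bradleyTerryProb_smul (by positivity)]
  have hσπ : bradleyTerryProb (fun y => π y ^ α) ≠ bradleyTerryProb fun y => Real.exp (r y) :=
    hσρ ▸ fun h => hne (eq_of_bradleyTerryProb_rpow_eq hα.ne' hπ hρpos hsum hρsum h)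
  have key := sum_mul_log_bradleyTerryProb_lt (D := D) (fun yy => hD yy.1 yy.2)
    (fun y => Real.exp_pos _) hBT (fun y => Real.rpow_pos_of_pos (hπ y) α) hσπ
  rw [← hσρ] at key
  rw [hL, hL]
  exact mul_lt_mul_of_neg_left key (neg_lt_zero.mpr (by positivity))
end

section
/- Let Y be a finite nonempty type, r : Y → ℝ, and α > 0. Let D : Y × Y → ℝ satisfy D(y₁, y₂) > 0 for all y₁, y₂ and D(y₁, y₂) * exp(r(y₂)) = D(y₂, y₁) * exp(r(y₁)) for all y₁, y₂. Define L : (Y → ℝ) → ℝ on the open set of functions with strictly positive values by L(π) = −(1/α) * ∑_{(y₁, y₂) ∈ Y × Y} D(y₁, y₂) * log( π(y₁)^α / (π(y₁)^α + π(y₂)^α) ). Suppose π : Y → ℝ has π(y) > 0 for all y, ∑_{y} π(y) = 1, and there exists λ ∈ ℝ such that the partial derivative of L with respect to the coordinate π(y) equals λ for every y ∈ Y (i.e., π is a first-order stationary point of L on the probability simplex). Then π(y) = exp(r(y)/α) / ∑_{y'} exp(r(y')/α) for all y. -/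
/-!
The partial derivative of `L` in the coordinate `y` is `-F y / π y`, where the flux
`F y = ∑ y', (D (y, y') P(y' ≻ y) - D (y', y) P(y ≻ y'))` under the Bradley–Terry model with scores
`α log π` sums to zero over `y`. Stationarity says `F y = -l π y`; summing and using `∑ π = 1`
gives `l = 0`, so `F ≡ 0`. The Bradley–Terry relation for `D` turns `F y` into a positively
weighted sum of `q y' - q y` with `q = π ^ α / exp r`, so by the maximum principle `q` is
constant, i.e. `π` is proportional to `exp (r / α)`.
-/

open Finset
open Real (exp log)

lemma HasDerivAt.log_rpow_div_rpow_add {x z : ℝ → ℝ} {x' z' t α : ℝ}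
    (hx : HasDerivAt x x' t) (hz : HasDerivAt z z' t) (hx0 : 0 < x t) (hz0 : 0 < z t) :
    HasDerivAt (fun s => Real.log (x s ^ α / (x s ^ α + z s ^ α)))
      (α * (z t ^ α / (z t ^ α + x t ^ α)) * (x' / x t - z' / z t)) t := by
  have hxα := Real.rpow_pos_of_pos hx0 α
  have hzα := Real.rpow_pos_of_pos hz0 α
  have hX := hx.rpow_const (p := α) (.inl hx0.ne')
  have hZ := hz.rpow_const (p := α) (.inl hz0.ne')
  refine ((hX.fun_div (hX.fun_add hZ) (add_pos hxα hzα).ne').log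
    (div_pos hxα (add_pos hxα hzα)).ne').congr_deriv ?_
  rw [Real.rpow_sub hx0, Real.rpow_sub hz0, Real.rpow_one, Real.rpow_one]
  field_simp
  ring

lemma rpow_div_exp_div {x α : ℝ} (hx : 0 ≤ x) (hα : α ≠ 0) (s : ℝ) :
    (x / exp (s / α)) ^ α = x ^ α / exp s := by
  rw [Real.div_rpow hx (Real.exp_pos _).le, ← Real.exp_mul, div_mul_cancel₀ _ hα]

section
variable {Y : Type*} [Fintype Y]

lemma eq_div_sum_of_eq_mul {p u : Y → ℝ} {c : ℝ} (h : ∀ y, p y = c * u y)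
    (hsum : ∑ y, p y = 1) (y : Y) : p y = u y / ∑ y', u y' := by
  have hc : c * ∑ y', u y' = 1 := by simp only [mul_sum, ← h, hsum]
  rw [h, eq_div_iff (right_ne_zero_of_mul_eq_one hc)]
  linear_combination u y * hc

lemma eq_of_forall_sum_mul_sub_eq_zero {w : Y → Y → ℝ} (hw : ∀ a b, 0 < w a b) {q : Y → ℝ}
    (hq : ∀ a, ∑ b, w a b * (q b - q a) = 0) (a b : Y) : q a = q b := by
  have : Nonempty Y := ⟨a⟩
  obtain ⟨m, hm⟩ := Finite.exists_max q
  suffices h : ∀ z, q z = q m by rw [h a, h b]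
  intro z
  -- At a maximum `m` of `q` every term of the vanishing sum is `≤ 0`, hence `0`.
  have hterm := (sum_eq_zero_iff_of_nonpos fun b _ =>
    mul_nonpos_of_nonneg_of_nonpos (hw m b).le (sub_nonpos.2 (hm b))).1 (hq m) z (mem_univ z)
  exact sub_eq_zero.1 ((mul_eq_zero.1 hterm).resolve_left (hw m z).ne')

lemma eq_softmax_of_rpow_div_exp_eq {α : ℝ} (hα : α ≠ 0) {p r : Y → ℝ} (hp : ∀ y, 0 < p y)
    (hsum : ∑ y, p y = 1) (hq : ∀ a b, p a ^ α / exp (r a) = p b ^ α / exp (r b)) (y : Y) :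
    p y = exp (r y / α) / ∑ y', exp (r y' / α) := by
  refine eq_div_sum_of_eq_mul (u := fun z => exp (r z / α)) (c := p y / exp (r y / α))
    (fun z => ?_) hsum y
  have hpos : ∀ z, 0 ≤ p z / exp (r z / α) := fun z => (div_pos (hp z) (Real.exp_pos _)).le
  have hz := Real.rpow_left_injOn hα (hpos z) (hpos y) (by
    simp only [rpow_div_exp_div (hp _).le hα, hq z y])
  rw [← hz, div_mul_cancel₀ _ (Real.exp_pos _).ne']

/-- The Bradley–Terry probability that `a` is preferred to `b` when each `y` has score
`α * log (p y)`. -/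
noncomputable def btProb (α : ℝ) (p : Y → ℝ) (a b : Y) : ℝ := p a ^ α / (p a ^ α + p b ^ α)

noncomputable def prefLoss (α : ℝ) (D : Y × Y → ℝ) (p : Y → ℝ) : ℝ :=
  -(1 / α) * ∑ yy : Y × Y, D yy * log (btProb α p yy.1 yy.2)

noncomputable def prefFlux (α : ℝ) (D : Y × Y → ℝ) (p : Y → ℝ) (y : Y) : ℝ :=
  ∑ y', (D (y, y') * btProb α p y' y - D (y', y) * btProb α p y y')

lemma sum_prod_mul_single_sub_single [DecidableEq Y] (g : Y × Y → ℝ) (y : Y) (c : ℝ) :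
    ∑ yy : Y × Y, g yy * ((Pi.single y c : Y → ℝ) yy.1 - (Pi.single y c : Y → ℝ) yy.2) =
      c * (∑ y', g (y, y') - ∑ y', g (y', y)) := by
  simp only [mul_sub, sum_sub_distrib, Fintype.sum_prod_type, ← sum_mul]
  rw [sum_comm]
  simp [Pi.single_apply, mul_sum, mul_comm]

theorem hasDerivAt_prefLoss_update [DecidableEq Y] {α : ℝ} (hα : α ≠ 0) (D : Y × Y → ℝ)
    {p : Y → ℝ} (hp : ∀ y, 0 < p y) (y : Y) :
    HasDerivAt (fun t => prefLoss α D (Function.update p y t)) (-(prefFlux α D p y / p y))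
      (p y) := by
  have hcoord (a : Y) :
      HasDerivAt (fun t => Function.update p y t a) ((Pi.single y 1 : Y → ℝ) a) (p y) :=
    hasDerivAt_pi.1 (hasDerivAt_update p y (p y)) a
  have hterm (yy : Y × Y) :
      HasDerivAt (fun t => D yy * log (btProb α (Function.update p y t) yy.1 yy.2))
        (D yy * (α * btProb α p yy.2 yy.1 *
          ((Pi.single y 1 : Y → ℝ) yy.1 / p yy.1 - (Pi.single y 1 : Y → ℝ) yy.2 / p yy.2)))
        (p y) := by
    have h := (hcoord yy.1).log_rpow_div_rpow_add (α := α) (hcoord yy.2)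
    simp only [Function.update_eq_self] at h
    exact (h (hp _) (hp _)).const_mul (D yy)
  have hsingle (a : Y) : (Pi.single y 1 : Y → ℝ) a / p a = (Pi.single y (p y)⁻¹ : Y → ℝ) a := by
    rcases eq_or_ne a y with rfl | h <;> simp [*]
  refine ((HasDerivAt.fun_sum fun yy _ => hterm yy).const_mul (-(1 / α))).congr_deriv ?_
  simp only [hsingle]
  rw [Fintype.sum_congr _ (fun yy => α * (D yy * btProb α p yy.2 yy.1 *
      ((Pi.single y (p y)⁻¹ : Y → ℝ) yy.1 - (Pi.single y (p y)⁻¹ : Y → ℝ) yy.2)))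
      (fun _ => by ring),
    ← mul_sum, sum_prod_mul_single_sub_single, prefFlux, sum_sub_distrib]
  field_simp

theorem sum_prefFlux_eq_zero (α : ℝ) (D : Y × Y → ℝ) (p : Y → ℝ) :
    ∑ y, prefFlux α D p y = 0 := by
  simp only [prefFlux, sum_sub_distrib]
  rw [sum_comm, sub_self]

lemma prefFlux_eq_sum_of_bradleyTerry {α : ℝ} {D : Y × Y → ℝ} {r : Y → ℝ}
    (hBT : ∀ a b, D (a, b) * exp (r b) = D (b, a) * exp (r a)) (p : Y → ℝ) (y : Y) :
    prefFlux α D p y = ∑ b, D (y, b) * exp (r b) / (p b ^ α + p y ^ α) *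
      (p b ^ α / exp (r b) - p y ^ α / exp (r y)) := by
  refine sum_congr rfl fun b _ => ?_
  rw [btProb, btProb, add_comm (p y ^ α), ← mul_div_assoc, ← mul_div_assoc, ← sub_div,
    div_mul_eq_mul_div]
  congr 1
  have := (Real.exp_pos (r b)).ne'
  have := (Real.exp_pos (r y)).ne'
  field_simp
  linear_combination p y ^ α * hBT y b

end

theorem spo_no_other_stationary_point_general (Y : Type*) [Fintype Y]
    [DecidableEq Y] (r : Y → ℝ) (α : ℝ) (hα : 0 < α)
    (D : Y × Y → ℝ) (hD : ∀ y₁ y₂, 0 < D (y₁, y₂))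
    (hBT : ∀ y₁ y₂, D (y₁, y₂) * Real.exp (r y₂) = D (y₂, y₁) * Real.exp (r y₁))
    (L : (Y → ℝ) → ℝ)
    (hL : ∀ p : Y → ℝ, L p = -(1 / α) *
      ∑ yy : Y × Y, D yy * Real.log ((p yy.1) ^ α / ((p yy.1) ^ α + (p yy.2) ^ α)))
    (π : Y → ℝ) (hπ : ∀ y, 0 < π y) (hsum : ∑ y, π y = 1)
    (hstat : ∃ l : ℝ, ∀ y : Y,
      deriv (fun t : ℝ => L (Function.update π y t)) (π y) = l) :
    ∀ y, π y = Real.exp (r y / α) / ∑ y', Real.exp (r y' / α) := by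
  obtain ⟨l, hl⟩ := hstat
  have hL' : L = prefLoss α D := funext hL
  have hflux (y : Y) : prefFlux α D π y = -l * π y := by
    have h := hl y
    rw [hL', (hasDerivAt_prefLoss_update hα.ne' D hπ y).deriv, neg_eq_iff_eq_neg,
      div_eq_iff (hπ y).ne'] at h
    linarith
  have hl0 : l = 0 := by
    have h := sum_prefFlux_eq_zero α D π
    simp only [hflux, ← mul_sum, hsum] at h
    linarith
  have hharmonic (a : Y) : ∑ b, D (a, b) * exp (r b) / (π b ^ α + π a ^ α) *
      (π b ^ α / exp (r b) - π a ^ α / exp (r a)) = 0 := by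
    rw [← prefFlux_eq_sum_of_bradleyTerry hBT, hflux, hl0, neg_zero, zero_mul]
  exact eq_softmax_of_rpow_div_exp_eq hα.ne' hπ hsum (eq_of_forall_sum_mul_sub_eq_zero
    (fun a b => div_pos (mul_pos (hD a b) (Real.exp_pos _))
      (add_pos (Real.rpow_pos_of_pos (hπ b) α) (Real.rpow_pos_of_pos (hπ a) α))) hharmonic)

/-- 'No other first-order stationary point' claim of SPO's Theorem 1: if `π` lies in
the relative interior of the probability simplex and all partial derivatives of the
preference loss `L` at `π` are equal (to a common Lagrange multiplier `l`), then
`π = softmax (r/α)`. The partial derivative with respect to the coordinate `π y`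
is the derivative of `t ↦ L (Function.update π y t)` at `t = π y`. -/
theorem spo_no_other_stationary_point (Y : Type*) [Fintype Y] [Nonempty Y]
    [DecidableEq Y] (r : Y → ℝ) (α : ℝ) (hα : 0 < α)
    (D : Y × Y → ℝ) (hD : ∀ y₁ y₂, 0 < D (y₁, y₂))
    (hBT : ∀ y₁ y₂, D (y₁, y₂) * Real.exp (r y₂) = D (y₂, y₁) * Real.exp (r y₁))
    (L : (Y → ℝ) → ℝ)
    (hL : ∀ p : Y → ℝ, L p = -(1 / α) *
      ∑ yy : Y × Y, D yy * Real.log ((p yy.1) ^ α / ((p yy.1) ^ α + (p yy.2) ^ α)))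
    (π : Y → ℝ) (hπ : ∀ y, 0 < π y) (hsum : ∑ y, π y = 1)
    (hstat : ∃ l : ℝ, ∀ y : Y,
      deriv (fun t : ℝ => L (Function.update π y t)) (π y) = l) :
    ∀ y, π y = Real.exp (r y / α) / ∑ y', Real.exp (r y' / α) :=
  spo_no_other_stationary_point_general Y r α hα D hD hBT L hL π hπ hsum hstat
end

section
/- Let Y be a finite nonempty type, r : Y → ℝ, and α > 0. Let D : Y × Y → ℝ satisfy D(y₁, y₂) > 0 for all y₁, y₂ and D(y₁, y₂) * exp(r(y₂)) = D(y₂, y₁) * exp(r(y₁)) for all y₁, y₂. Let μ : Y × Y → ℝ satisfy μ(y₁, y₂) = μ(y₂, y₁) > 0 for all y₁, y₂. For π : Y → ℝ with strictly positive values, define v : Y → ℝ by v(y) = ∑_{y'} ( D(y, y') * μ(y, y') * π(y')^α − D(y', y) * μ(y', y) * π(y)^α ) / ( (π(y)^α + π(y')^α) * π(y) ). Let ρ(y) = exp(r(y)/α) / ∑_{y'} exp(r(y')/α). Then for every π with π(y) > 0 for all y, ∑_{y} π(y) = 1, and π ≠ ρ, it holds that ∑_{y} v(y) * (π(y) − ρ(y))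 < 0. -/
open Finset

private lemma spo_aux_sign (α : ℝ) (hα : 0 < α) (A B : ℝ) (hA : 0 < A) (hB : 0 < B) :
    (A ^ α - B ^ α) * (B - A) ≤ 0 := by
  rcases le_total A B with h | h
  · have h1 : A ^ α ≤ B ^ α := Real.rpow_le_rpow hA.le h hα.le
    nlinarith
  · have h1 : B ^ α ≤ A ^ α := Real.rpow_le_rpow hB.le h hα.le
    nlinarith

private lemma spo_aux_sign_lt (α : ℝ) (hα : 0 < α) (A B : ℝ) (hA : 0 < A) (hB : 0 < B)
    (hne : A ≠ B) : (A ^ α - B ^ α) * (B - A) < 0 := by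
  rcases lt_or_gt_of_ne hne with h | h
  · have h1 : A ^ α < B ^ α := Real.rpow_lt_rpow hA.le h hα
    nlinarith
  · have h1 : B ^ α < A ^ α := Real.rpow_lt_rpow hB.le h hα
    nlinarith

private lemma spo_aux_key (α : ℝ) (hα : 0 < α) (p p' rr rr' dab dba m : ℝ)
    (hp : 0 < p) (hp' : 0 < p') (hr : 0 < rr) (hr' : 0 < rr')
    (hdba : 0 < dba) (hm : 0 < m)
    (hrel : dab * rr' ^ α = dba * rr ^ α) :
    (dab * m * p' ^ α - dba * m * p ^ α) / ((p ^ α + p' ^ α) * p) * (p - rr) +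
      (dba * m * p ^ α - dab * m * p' ^ α) / ((p' ^ α + p ^ α) * p') * (p' - rr') =
    m * dba / (rr' ^ α * (p ^ α + p' ^ α) * p * p') *
      (((rr * p') ^ α - (rr' * p) ^ α) * (rr' * p - rr * p')) := by
  have hPα : (0:ℝ) < p ^ α := Real.rpow_pos_of_pos hp α
  have hP'α : (0:ℝ) < p' ^ α := Real.rpow_pos_of_pos hp' α
  have hR'α : (0:ℝ) < rr' ^ α := Real.rpow_pos_of_pos hr' α
  have h1 : p ^ α ≠ 0 := hPα.ne'
  have h2 : p' ^ α ≠ 0 := hP'α.ne'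
  have h3 : rr' ^ α ≠ 0 := hR'α.ne'
  have h4 : p ≠ 0 := hp.ne'
  have h5 : p' ≠ 0 := hp'.ne'
  have h6 : p ^ α + p' ^ α ≠ 0 := by positivity
  have hdab_eq : dab = dba * rr ^ α / rr' ^ α := by
    field_simp
    linarith [hrel]
  rw [Real.mul_rpow hr.le hp'.le, Real.mul_rpow hr'.le hp.le, hdab_eq]
  field_simp
  ring

/-- Descent property establishing SPO's Theorem 2 (weighted preference loss):
with `v` the negative gradient of the weighted preference loss in the tabular model,
`∑ y, v y * (π y - ρ y) < 0` for every `π` in the relative interior of the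
probability simplex with `π ≠ ρ = softmax (r/α)`. -/
theorem spo_weighted_descent (Y : Type*) [Fintype Y] [Nonempty Y]
    (r : Y → ℝ) (α : ℝ) (hα : 0 < α)
    (D : Y × Y → ℝ) (hD : ∀ y₁ y₂, 0 < D (y₁, y₂))
    (hBT : ∀ y₁ y₂, D (y₁, y₂) * Real.exp (r y₂) = D (y₂, y₁) * Real.exp (r y₁))
    (μ : Y × Y → ℝ) (hμsym : ∀ y₁ y₂, μ (y₁, y₂) = μ (y₂, y₁))
    (hμpos : ∀ y₁ y₂, 0 < μ (y₁, y₂))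
    (ρ : Y → ℝ) (hρ : ∀ y, ρ y = Real.exp (r y / α) / ∑ y', Real.exp (r y' / α))
    (π : Y → ℝ) (hπ : ∀ y, 0 < π y) (hsum : ∑ y, π y = 1) (hne : π ≠ ρ)
    (v : Y → ℝ)
    (hv : ∀ y, v y = ∑ y',
      (D (y, y') * μ (y, y') * (π y') ^ α - D (y', y) * μ (y', y) * (π y) ^ α) /
        (((π y) ^ α + (π y') ^ α) * π y)) :
    ∑ y, v y * (π y - ρ y) < 0 := by
  classical
  have hαne : α ≠ 0 := hα.ne'
  set f : Y → Y → ℝ := fun y y' =>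
    (D (y, y') * μ (y, y') * (π y') ^ α - D (y', y) * μ (y', y) * (π y) ^ α) /
      (((π y) ^ α + (π y') ^ α) * π y) * (π y - ρ y) with hf
  have hT : ∑ y, v y * (π y - ρ y) = ∑ y, ∑ y', f y y' := by
    refine Finset.sum_congr rfl fun y _ => ?_
    rw [hv, Finset.sum_mul]
  have hSpos : 0 < ∑ y', Real.exp (r y' / α) :=
    Finset.sum_pos (fun y _ => Real.exp_pos _) Finset.univ_nonempty
  have hρpos : ∀ y, 0 < ρ y := fun y => by rw [hρ y]; positivity
  have hρsum : ∑ y, ρ y = 1 := by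
    rw [Finset.sum_congr rfl fun y _ => hρ y, ← Finset.sum_div, div_self hSpos.ne']
  have hexp : ∀ c : ℝ, Real.exp (c / α) ^ α = Real.exp c := fun c => by
    rw [Real.rpow_def_of_pos (Real.exp_pos _), Real.log_exp, div_mul_cancel₀ _ hαne]
  have hρrel : ∀ y y', D (y, y') * (ρ y') ^ α = D (y', y) * (ρ y) ^ α := by
    intro y y'
    rw [hρ y, hρ y', Real.div_rpow (Real.exp_pos _).le hSpos.le,
        Real.div_rpow (Real.exp_pos _).le hSpos.le, hexp, hexp,
        ← mul_div_assoc, ← mul_div_assoc, hBT]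
  -- key pairwise identity
  have hkey : ∀ y y', f y y' + f y' y =
      μ (y, y') * D (y', y) /
          ((ρ y') ^ α * ((π y) ^ α + (π y') ^ α) * π y * π y') *
        (((ρ y * π y') ^ α - (ρ y' * π y) ^ α) * (ρ y' * π y - ρ y * π y')) := by
    intro y y'
    have h := spo_aux_key α hα (π y) (π y') (ρ y) (ρ y') (D (y, y')) (D (y', y)) (μ (y, y'))
      (hπ y) (hπ y') (hρpos y) (hρpos y') (hD y' y) (hμpos y y') (hρrel y y')
    simp only [hf]
    rw [hμsym y' y]
    exact h
  have hle : ∀ y y', f y y' + f y' y ≤ 0 := fun y y' => by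
    rw [hkey]
    have hμD : 0 ≤ μ (y, y') * D (y', y) /
        ((ρ y') ^ α * ((π y) ^ α + (π y') ^ α) * π y * π y') := by
      have h1 := hμpos y y'
      have h2 := hD y' y
      have h3 := hρpos y'
      have h4 := hπ y
      have h5 := hπ y'
      positivity
    exact mul_nonpos_of_nonneg_of_nonpos hμD
      (spo_aux_sign α hα _ _ (by have := hρpos y; have := hπ y'; positivity)
        (by have := hρpos y'; have := hπ y; positivity))
  -- a strict pair exists
  obtain ⟨y₀, y₁, hw⟩ : ∃ y₀ y₁, ρ y₀ * π y₁ ≠ ρ y₁ * π y₀ := by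
    by_contra h
    push_neg at h
    refine hne (funext fun y => ?_)
    have h1 : π y = ∑ y', π y * ρ y' := by rw [← Finset.mul_sum, hρsum, mul_one]
    have h2 : ρ y = ∑ y', ρ y * π y' := by rw [← Finset.mul_sum, hsum, mul_one]
    rw [h1, h2]
    refine Finset.sum_congr rfl fun y' _ => ?_
    rw [mul_comm (π y), h y' y]
  have hlt : f y₀ y₁ + f y₁ y₀ < 0 := by
    rw [hkey]
    have hμD : 0 < μ (y₀, y₁) * D (y₁, y₀) /
        ((ρ y₁) ^ α * ((π y₀) ^ α + (π y₁) ^ α) * π y₀ * π y₁) := by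
      have h1 := hμpos y₀ y₁
      have h2 := hD y₁ y₀
      have h3 := hρpos y₁
      have h4 := hπ y₀
      have h5 := hπ y₁
      positivity
    exact mul_neg_of_pos_of_neg hμD
      (spo_aux_sign_lt α hα _ _ (by have := hρpos y₀; have := hπ y₁; positivity)
        (by have := hρpos y₁; have := hπ y₀; positivity) hw)
  -- symmetrize the double sum
  have hswap : ∑ y, ∑ y', f y y' = ∑ y, ∑ y', f y' y := Finset.sum_comm
  have hdsum : ∑ p : Y × Y, (f p.1 p.2 + f p.2 p.1) < 0 := by
    have h0 : (0:ℝ) = ∑ _p : Y × Y, (0:ℝ) := by simp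
    rw [h0]
    exact Finset.sum_lt_sum (fun p _ => hle p.1 p.2)
      ⟨(y₀, y₁), Finset.mem_univ _, hlt⟩
  have hprod : ∑ p : Y × Y, (f p.1 p.2 + f p.2 p.1)
      = ∑ y, ∑ y', (f y y' + f y' y) := by
    rw [Fintype.sum_prod_type]
  have hsplit : ∑ y, ∑ y', (f y y' + f y' y)
      = (∑ y, ∑ y', f y y') + (∑ y, ∑ y', f y' y) := by
    simp [Finset.sum_add_distrib]
  rw [hT]
  have h2 : (∑ y, ∑ y', f y y') + (∑ y, ∑ y', f y y') < 0 := by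
    nth_rewrite 2 [hswap]
    rw [← hsplit, ← hprod]
    exact hdsum
  linarith
end

section
/- Let Y be a finite type with at least two elements, r : Y → ℝ, and suppose y* ∈ Y is the unique maximizer of r, i.e., r(y) < r(y*) for all y ≠ y*. Let D : Y × Y → ℝ satisfy D(y₁, y₂) > 0 for all y₁, y₂ and D(y₁, y₂) * exp(r(y₂)) = D(y₂, y₁) * exp(r(y₁)) for all y₁, y₂. Let μ : Y × Y → ℝ satisfy μ(y₁, y₂) = μ(y₂, y₁) > 0 for all y₁, y₂. For π : Y → ℝ with strictly positive values, define v : Y → ℝ by v(y) = (1 / (2 * π(y))) * ∑_{y'} ( D(y, y') − D(y', y) ) * μ(y, y'). Then for every π with π(y) > 0 for all y and ∑_{y} π(y) = 1, it holds that ∑_{y} v(y) * ( π(y) − (if y = y* then 1 else 0) ) < 0. -/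
/-- The `α = 0` case of SPO's Theorem 2: with `v` the negative gradient of the
weighted `α = 0` preference loss, the point mass at the unique reward maximizer
`ystar` satisfies `∑ y, v y * (π y - δ_{ystar} y) < 0` for every `π` in the relative
interior of the probability simplex. -/
theorem spo_alpha_zero_descent (Y : Type*) [Fintype Y] [DecidableEq Y]
    (hcard : 1 < Fintype.card Y)
    (r : Y → ℝ) (ystar : Y) (hmax : ∀ y, y ≠ ystar → r y < r ystar)
    (D : Y × Y → ℝ) (hD : ∀ y₁ y₂, 0 < D (y₁, y₂))
    (hBT : ∀ y₁ y₂, D (y₁, y₂) * Real.exp (r y₂) = D (y₂, y₁) * Real.exp (r y₁))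
    (μ : Y × Y → ℝ) (hμsym : ∀ y₁ y₂, μ (y₁, y₂) = μ (y₂, y₁))
    (hμpos : ∀ y₁ y₂, 0 < μ (y₁, y₂))
    (π : Y → ℝ) (hπ : ∀ y, 0 < π y) (hsum : ∑ y, π y = 1)
    (v : Y → ℝ)
    (hv : ∀ y, v y = (1 / (2 * π y)) * ∑ y', (D (y, y') - D (y', y)) * μ (y, y')) :
    ∑ y, v y * (π y - if y = ystar then 1 else 0) < 0 := by
  set f : Y → Y → ℝ := fun y y' => (D (y, y') - D (y', y)) * μ (y, y') with hf
  have hanti : ∀ y y', f y y' = - f y' y := by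
    intro y y'
    simp only [hf, hμsym y y']
    ring
  -- the double sum vanishes
  have hdouble : ∑ y, ∑ y', f y y' = 0 := by
    have h1 : ∑ y, ∑ y', f y y' = - ∑ y, ∑ y', f y y' := by
      calc ∑ y, ∑ y', f y y' = ∑ y', ∑ y, f y y' := Finset.sum_comm
        _ = ∑ y', ∑ y, -(f y' y) :=
            Finset.sum_congr rfl fun y' _ => Finset.sum_congr rfl fun y _ => hanti y y'
        _ = - ∑ y', ∑ y, f y' y := by simp [Finset.sum_neg_distrib]
    linarith
  have hvπ : ∀ y, v y * π y = (∑ y', f y y') / 2 := by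
    intro y
    rw [hv y]
    have := (hπ y).ne'
    field_simp
    ring
  have hsum0 : ∑ y, v y * π y = 0 := by
    calc ∑ y, v y * π y = ∑ y, (∑ y', f y y') / 2 := by
          exact Finset.sum_congr rfl fun y _ => hvπ y
      _ = (∑ y, ∑ y', f y y') / 2 := by rw [Finset.sum_div]
      _ = 0 := by rw [hdouble]; norm_num
  -- v ystar > 0
  have hSpos : 0 < ∑ y', f ystar y' := by
    obtain ⟨y0, hy0⟩ := Fintype.exists_ne_of_one_lt_card hcard ystar
    have hterm : ∀ y', 0 ≤ f ystar y' := by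
      intro y'
      rcases eq_or_ne y' ystar with h | h
      · simp [hf, h]
      · have hr := hmax y' h
        have hDgt : D (y', ystar) < D (ystar, y') := by
          have hbt := hBT ystar y'
          have he : Real.exp (r y') < Real.exp (r ystar) := Real.exp_lt_exp.mpr hr
          nlinarith [hD y' ystar, Real.exp_pos (r y'), Real.exp_pos (r ystar)]
        have := hμpos ystar y'
        have : 0 < f ystar y' := by
          simp only [hf]
          nlinarith
        linarith
    have hy0pos : 0 < f ystar y0 := by
      have hr := hmax y0 hy0
      have hDgt : D (y0, ystar) < D (ystar, y0) := by
        have hbt := hBT ystar y0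
        have he : Real.exp (r y0) < Real.exp (r ystar) := Real.exp_lt_exp.mpr hr
        nlinarith [hD y0 ystar, Real.exp_pos (r y0), Real.exp_pos (r ystar)]
      have := hμpos ystar y0
      simp only [hf]
      nlinarith
    exact Finset.sum_pos' (fun y' _ => hterm y') ⟨y0, Finset.mem_univ y0, hy0pos⟩
  have hvpos : 0 < v ystar := by
    rw [hv ystar]
    exact mul_pos (one_div_pos.mpr (by linarith [hπ ystar])) hSpos
  have hsplit : ∑ y, v y * (π y - if y = ystar then 1 else 0)
      = (∑ y, v y * π y) - v ystar := by
    have h1 : ∀ y, v y * (π y - if y = ystar then 1 else 0)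
        = v y * π y - (if y = ystar then v y else 0) := by
      intro y; by_cases h : y = ystar <;> simp [h] <;> ring
    rw [Finset.sum_congr rfl fun y _ => h1 y, Finset.sum_sub_distrib,
      Finset.sum_ite_eq' Finset.univ ystar v]
    simp
  rw [hsplit, hsum0]
  linarith
end

section
/- Let Y be a finite nonempty type, r : Y → ℝ, α > 0, and n ≥ 2 an integer. Let D : (Fin n → Y) × Fin n → ℝ satisfy D(ys, i) > 0 for all ys and i, and the n-ary Bradley–Terry consistency D(ys, i) * exp(r(ys j)) = D(ys, j) * exp(r(ys i)) for all ys, i, j. Let μ : (Fin n → Y) → ℝ satisfy μ(ys) > 0 for all ys and μ(ys ∘ σ) = μ(ys) for every permutation σ of Fin n. Define L on the open set of functions π : Y → ℝ with strictly positive values by L(π) = −(1/α) * ∑_{ys} ∑_{i} D(ys, i) * μ(ys) * log( π(ys i)^α / ∑_{j} π(ys j)^α ), and let ρ(y) = exp(r(y)/α) / ∑_{y'} exp(r(y')/α). Then for every π with π(y) > 0 for all y, ∑_{y} π(y) = 1, and π ≠ ρ, it holds that ∑_{y} (∂L/∂π(y))(π) * (π(y) − ρ(y)) > 0. -/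
/-!
Write `a = π ^ α`, `t = ρ / π` on a tuple `ys`. By the Bradley–Terry consistency the winner
weights of `ys` are proportional to `ρ (ys i) ^ α = a i * t i ^ α`, and the contribution of `ys` to
`∑ y, ∂L/∂π(y) (π y - ρ y)` becomes a positive multiple of the `a`-weighted covariance of `t` and
`t ^ α`. This covariance is nonnegative by Chebyshev's sum inequality, as `t ↦ t ^ α` is increasing,
and strictly positive for a tuple on which `t` is not constant. Such a tuple exists since `n ≥ 2`
and `ρ / π` is not constant, `π ≠ ρ` being probability vectors.
-/

open Finset

section

-- Not opened for the theorem, where `π` is a variable rather than `Real.pi`.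
open Real

section Chebyshev

variable {ι : Type*} [Fintype ι] {a t f : ι → ℝ}

theorem two_mul_sum_mul_sum_sub_eq (a t f : ι → ℝ) :
    2 * ((∑ j, a j) * (∑ j, a j * t j * f j) - (∑ j, a j * t j) * (∑ j, a j * f j)) =
      ∑ j, ∑ k, a j * a k * ((t j - t k) * (f j - f k)) := by
  have expand : ∀ j k, a j * a k * ((t j - t k) * (f j - f k)) =
      a j * t j * f j * a k + a j * (a k * t k * f k) - a j * f j * (a k * t k)
        - a j * t j * (a k * f k) := fun j k => by ring
  simp only [expand, sum_sub_distrib, sum_add_distrib, ← sum_mul_sum]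
  ring

theorem sum_mul_sum_le_sum_mul_sum (ha : ∀ j, 0 ≤ a j)
    (htf : ∀ j k, 0 ≤ (t j - t k) * (f j - f k)) :
    (∑ j, a j * t j) * (∑ j, a j * f j) ≤ (∑ j, a j) * (∑ j, a j * t j * f j) := by
  have hcov := two_mul_sum_mul_sum_sub_eq a t f
  have : 0 ≤ ∑ j, ∑ k, a j * a k * ((t j - t k) * (f j - f k)) :=
    sum_nonneg fun j _ => sum_nonneg fun k _ => mul_nonneg (mul_nonneg (ha j) (ha k)) (htf j k)
  linarith

theorem sum_mul_sum_lt_sum_mul_sum (ha : ∀ j, 0 < a j)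
    (htf : ∀ j k, 0 ≤ (t j - t k) * (f j - f k)) {j₀ k₀ : ι}
    (hjk : 0 < (t j₀ - t k₀) * (f j₀ - f k₀)) :
    (∑ j, a j * t j) * (∑ j, a j * f j) < (∑ j, a j) * (∑ j, a j * t j * f j) := by
  have hcov := two_mul_sum_mul_sum_sub_eq a t f
  have hterm : ∀ j k, 0 ≤ a j * a k * ((t j - t k) * (f j - f k)) := fun j k =>
    mul_nonneg (mul_pos (ha j) (ha k)).le (htf j k)
  have : 0 < ∑ j, ∑ k, a j * a k * ((t j - t k) * (f j - f k)) :=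
    sum_pos' (fun j _ => sum_nonneg fun k _ => hterm j k)
      ⟨j₀, mem_univ _, sum_pos' (fun k _ => hterm j₀ k)
        ⟨k₀, mem_univ _, mul_pos (mul_pos (ha j₀) (ha k₀)) hjk⟩⟩
  linarith

end Chebyshev

theorem sub_mul_rpow_sub_rpow_nonneg {α x y : ℝ} (hα : 0 ≤ α) (hx : 0 ≤ x) (hy : 0 ≤ y) :
    0 ≤ (x - y) * (x ^ α - y ^ α) := by
  rcases le_total x y with h | h
  · exact mul_nonneg_of_nonpos_of_nonpos (sub_nonpos.2 h) (sub_nonpos.2 (rpow_le_rpow hx h hα))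
  · exact mul_nonneg (sub_nonneg.2 h) (sub_nonneg.2 (rpow_le_rpow hy h hα))

theorem sub_mul_rpow_sub_rpow_pos {α x y : ℝ} (hα : 0 < α) (hx : 0 ≤ x) (hy : 0 ≤ y)
    (hxy : x ≠ y) : 0 < (x - y) * (x ^ α - y ^ α) := by
  rcases hxy.lt_or_gt with h | h
  · exact mul_pos_of_neg_of_neg (sub_neg.2 h) (sub_neg.2 (rpow_lt_rpow hx h hα))
  · exact mul_pos (sub_pos.2 h) (sub_pos.2 (rpow_lt_rpow hy h hα))

theorem eq_sum_div_sum_mul_of_mul_eq_mul {ι : Type*} [Fintype ι] {D e : ι → ℝ}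
    (he : ∑ j, e j ≠ 0) (h : ∀ i j, D i * e j = D j * e i) (i : ι) :
    D i = (∑ j, D j) / (∑ j, e j) * e i := by
  rw [div_mul_eq_mul_div, eq_div_iff he, mul_sum, sum_mul]
  exact sum_congr rfl fun j _ => h i j

section TupleDescent

variable {ι : Type*} [Fintype ι] {α : ℝ} {v w : ι → ℝ}

/-- The contribution of one tuple `ys` to the descent sum, up to a positive factor, with
`v = π ∘ ys` and `w = ρ ∘ ys`: its Bradley–Terry winner weights are proportional to `w i ^ α`. -/
noncomputable def tupleDescent (α : ℝ) (v w : ι → ℝ) : ℝ :=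
  ∑ i, w i ^ α * ((∑ j, v j ^ (α - 1) * (v j - w j)) / (∑ j, v j ^ α) - (v i - w i) / v i)

theorem tupleDescent_eq [Nonempty ι] (hv : ∀ j, 0 < v j) (hw : ∀ j, 0 ≤ w j) :
    tupleDescent α v w =
      ((∑ j, v j ^ α) * (∑ j, v j ^ α * (w j / v j) * (w j / v j) ^ α)
        - (∑ j, v j ^ α * (w j / v j)) * (∑ j, v j ^ α * (w j / v j) ^ α)) / ∑ j, v j ^ α := by
  have hA : 0 < ∑ j, v j ^ α := sum_pos (fun j _ => rpow_pos_of_pos (hv j) α) univ_nonempty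
  have hwα : ∀ j, w j ^ α = v j ^ α * (w j / v j) ^ α := fun j => by
    rw [div_rpow (hw j) (hv j).le, mul_div_cancel₀ _ (rpow_pos_of_pos (hv j) α).ne']
  have hgap : ∀ j, v j ^ (α - 1) * (v j - w j) = v j ^ α - v j ^ α * (w j / v j) := fun j => by
    have hvj := (hv j).ne'
    rw [rpow_sub_one hvj]
    field_simp
  have hrel : ∀ i, (v i - w i) / v i = 1 - w i / v i := fun i => by
    rw [sub_div, div_self (hv i).ne']
  simp only [tupleDescent, hwα, hgap, hrel, mul_sub, mul_one, sum_sub_distrib, ← sum_mul]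
  field_simp
  ring

theorem tupleDescent_nonneg [Nonempty ι] (hα : 0 ≤ α) (hv : ∀ j, 0 < v j) (hw : ∀ j, 0 ≤ w j) :
    0 ≤ tupleDescent α v w := by
  rw [tupleDescent_eq hv hw]
  refine div_nonneg (sub_nonneg.2 (sum_mul_sum_le_sum_mul_sum
    (fun j => (rpow_pos_of_pos (hv j) α).le) fun j k => ?_)) (sum_nonneg fun j _ => ?_)
  · exact sub_mul_rpow_sub_rpow_nonneg hα (div_nonneg (hw j) (hv j).le)
      (div_nonneg (hw k) (hv k).le)
  · exact (rpow_pos_of_pos (hv j) α).le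

theorem tupleDescent_pos [Nonempty ι] (hα : 0 < α) (hv : ∀ j, 0 < v j) (hw : ∀ j, 0 ≤ w j)
    {j₀ k₀ : ι} (hjk : w j₀ / v j₀ ≠ w k₀ / v k₀) : 0 < tupleDescent α v w := by
  have hdiv : ∀ j, 0 ≤ w j / v j := fun j => div_nonneg (hw j) (hv j).le
  rw [tupleDescent_eq hv hw]
  exact div_pos (sub_pos.2 (sum_mul_sum_lt_sum_mul_sum (fun j => rpow_pos_of_pos (hv j) α)
      (fun j k => sub_mul_rpow_sub_rpow_nonneg hα.le (hdiv j) (hdiv k))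
      (sub_mul_rpow_sub_rpow_pos hα (hdiv j₀) (hdiv k₀) hjk)))
    (sum_pos (fun j _ => rpow_pos_of_pos (hv j) α) univ_nonempty)

theorem sum_mul_eq_mul_tupleDescent {c : ι → ℝ} (hw : ∑ j, w j ^ α ≠ 0)
    (hc : ∀ i j, c i * w j ^ α = c j * w i ^ α) :
    ∑ i, c i * ((∑ j, v j ^ (α - 1) * (v j - w j)) / (∑ j, v j ^ α) - (v i - w i) / v i) =
      (∑ j, c j) / (∑ j, w j ^ α) * tupleDescent α v w := by
  simp only [tupleDescent, mul_sum]
  refine sum_congr rfl fun i _ => ?_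
  rw [eq_sum_div_sum_mul_of_mul_eq_mul hw hc i, mul_assoc]

end TupleDescent

theorem HasFDerivAt.sum_deriv_update_mul {Y : Type*} [Fintype Y] [DecidableEq Y]
    {F : (Y → ℝ) → ℝ} {F' : (Y → ℝ) →L[ℝ] ℝ} {x : Y → ℝ} (hF : HasFDerivAt F F' x)
    (h : Y → ℝ) : ∑ y, deriv (fun t => F (Function.update x y t)) (x y) * h y = F' h := by
  have hpartial : ∀ y, deriv (fun t => F (Function.update x y t)) (x y) = F' (Pi.single y 1) :=
    fun y => by
      rw [← Function.update_eq_self y x] at hF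
      exact (hF.comp_hasDerivAt (x y) (hasDerivAt_update x y (x y))).deriv
  conv_rhs => rw [pi_eq_sum_univ' h]
  simp [hpartial, mul_comm]

section BestOfNLoss

variable {Y ι : Type*} [Fintype Y] [Fintype ι]

local notation "proj" => ContinuousLinearMap.proj (R := ℝ) (φ := fun _ : Y => ℝ)

theorem hasFDerivAt_log_rpow_div_sum [Nonempty ι] (α : ℝ) (ys : ι → Y) (i : ι) {x : Y → ℝ}
    (hx : ∀ j, 0 < x (ys j)) :
    HasFDerivAt (fun p : Y → ℝ => log (p (ys i) ^ α / ∑ j, p (ys j) ^ α))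
      (α • ((x (ys i))⁻¹ • proj (ys i) -
        (∑ j, x (ys j) ^ α)⁻¹ • ∑ j, x (ys j) ^ (α - 1) • proj (ys j))) x := by
  have hS : 0 < ∑ j, x (ys j) ^ α := sum_pos (fun j _ => rpow_pos_of_pos (hx j) α) univ_nonempty
  have hnum := ((hasFDerivAt_apply (𝕜 := ℝ) (ys i) x).log (hx i).ne').const_mul α
  have hden := (HasFDerivAt.fun_sum (u := univ) fun j _ =>
    (hasFDerivAt_apply (𝕜 := ℝ) (ys j) x).rpow_const (p := α) (Or.inl (hx j).ne')).log hS.ne'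
  refine (hnum.fun_sub hden).congr_of_eventuallyEq ?_ |>.congr_fderiv ?_
  · have hpos : ∀ᶠ p : Y → ℝ in nhds x, ∀ j, 0 < p (ys j) :=
      Filter.eventually_all.2 fun j =>
        (continuous_apply (ys j)).continuousAt.eventually (lt_mem_nhds (hx j))
    filter_upwards [hpos] with p hp
    rw [log_div (rpow_pos_of_pos (hp i) α).ne'
      (sum_pos (fun j _ => rpow_pos_of_pos (hp j) α) univ_nonempty).ne', log_rpow (hp i)]
  · ext q
    simp [smul_sub, smul_sum, mul_assoc, mul_left_comm]

theorem sum_deriv_update_mul_of_eq_bestOfN_loss [DecidableEq Y] [DecidableEq ι] [Nonempty ι]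
    {α : ℝ} (hα : α ≠ 0) (c : (ι → Y) → ι → ℝ) {L : (Y → ℝ) → ℝ}
    (hL : ∀ p : Y → ℝ, L p = -(1 / α) *
      ∑ ys : ι → Y, ∑ i, c ys i * log (p (ys i) ^ α / ∑ j, p (ys j) ^ α))
    {x : Y → ℝ} (hx : ∀ y, 0 < x y) (h : Y → ℝ) :
    ∑ y, deriv (fun t => L (Function.update x y t)) (x y) * h y =
      ∑ ys : ι → Y, ∑ i, c ys i *
        ((∑ j, x (ys j) ^ (α - 1) * h (ys j)) / (∑ j, x (ys j) ^ α) - h (ys i) / x (ys i)) := by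
  obtain rfl : L = _ := funext hL
  have hF := (HasFDerivAt.fun_sum (u := univ) fun ys _ =>
    HasFDerivAt.fun_sum (u := univ) fun i _ =>
      (hasFDerivAt_log_rpow_div_sum α ys i fun j => hx (ys j)).const_mul (c ys i)).const_mul
    (-(1 / α))
  refine (hF.sum_deriv_update_mul h).trans ?_
  simp only [FunLike.coe_smul, FunLike.coe_sum, FunLike.coe_sub, Finset.sum_apply, Pi.smul_apply,
    Pi.sub_apply, ContinuousLinearMap.proj_apply, smul_eq_mul, mul_sum]
  refine sum_congr rfl fun ys _ => sum_congr rfl fun i _ => ?_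
  rw [← mul_sum]
  field_simp
  ring

end BestOfNLoss

section Softmax

variable {Y : Type*} [Fintype Y] {r ρ : Y → ℝ} {α : ℝ}

theorem softmax_pos [Nonempty Y] (hρ : ∀ y, ρ y = exp (r y / α) / ∑ y', exp (r y' / α))
    (y : Y) : 0 < ρ y :=
  hρ y ▸ div_pos (exp_pos _) (sum_pos (fun _ _ => exp_pos _) univ_nonempty)

theorem sum_softmax [Nonempty Y] (hρ : ∀ y, ρ y = exp (r y / α) / ∑ y', exp (r y' / α)) :
    ∑ y, ρ y = 1 := by
  simp only [hρ, ← sum_div]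
  exact div_self (sum_pos (fun _ _ => exp_pos _) univ_nonempty).ne'

theorem softmax_rpow (hα : α ≠ 0) (hρ : ∀ y, ρ y = exp (r y / α) / ∑ y', exp (r y' / α))
    (y : Y) : ρ y ^ α = exp (r y) / (∑ y', exp (r y' / α)) ^ α := by
  rw [hρ, div_rpow (exp_pos _).le (sum_nonneg fun _ _ => (exp_pos _).le), ← exp_mul,
    div_mul_cancel₀ _ hα]

end Softmax

theorem exists_div_ne_div_of_sum_eq {Y : Type*} [Fintype Y] {p q : Y → ℝ} (hp : ∀ y, p y ≠ 0)
    (hsum : ∑ y, q y = ∑ y, p y) (hsum₀ : ∑ y, p y ≠ 0) (hne : p ≠ q) :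
    ∃ y₁ y₂, q y₁ / p y₁ ≠ q y₂ / p y₂ := by
  obtain ⟨y₀, hy₀⟩ := Function.ne_iff.mp hne
  by_contra! hconst
  have hq : ∀ y, q y = q y₀ / p y₀ * p y := fun y => by
    rw [hconst y₀ y, div_mul_cancel₀ _ (hp y)]
  have hratio : q y₀ / p y₀ = 1 := by
    rw [sum_congr rfl fun y _ => hq y, ← mul_sum] at hsum
    exact (mul_eq_right₀ hsum₀).mp hsum
  exact hy₀ (by rw [hq y₀, hratio, one_mul])

end

theorem spo_bestofn_descent_general (Y : Type*) [Fintype Y] [DecidableEq Y]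
    (r : Y → ℝ) (α : ℝ) (hα : 0 < α) (n : ℕ) (hn : 2 ≤ n)
    (D : (Fin n → Y) × Fin n → ℝ) (hD : ∀ ys i, 0 < D (ys, i))
    (hBT : ∀ (ys : Fin n → Y) (i j : Fin n),
      D (ys, i) * Real.exp (r (ys j)) = D (ys, j) * Real.exp (r (ys i)))
    (μ : (Fin n → Y) → ℝ) (hμpos : ∀ ys, 0 < μ ys)
    (L : (Y → ℝ) → ℝ)
    (hL : ∀ p : Y → ℝ, L p = -(1 / α) *
      ∑ ys : Fin n → Y, ∑ i : Fin n, D (ys, i) * μ ys *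
        Real.log ((p (ys i)) ^ α / ∑ j : Fin n, (p (ys j)) ^ α))
    (ρ : Y → ℝ) (hρ : ∀ y, ρ y = Real.exp (r y / α) / ∑ y', Real.exp (r y' / α))
    (π : Y → ℝ) (hπ : ∀ y, 0 < π y) (hsum : ∑ y, π y = 1) (hne : π ≠ ρ) :
    0 < ∑ y, deriv (fun t : ℝ => L (Function.update π y t)) (π y) * (π y - ρ y) := by
  have : Nonempty Y := ⟨(Function.ne_iff.mp hne).choose⟩
  have : Nontrivial (Fin n) := Fin.nontrivial_iff_two_le.2 hn
  have hρpos := softmax_pos hρ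
  have hρα : ∀ ys : Fin n → Y, 0 < ∑ j, ρ (ys j) ^ α := fun ys =>
    sum_pos (fun j _ => Real.rpow_pos_of_pos (hρpos _) α) univ_nonempty
  have hBTρ : ∀ ys i j, D (ys, i) * μ ys * ρ (ys j) ^ α = D (ys, j) * μ ys * ρ (ys i) ^ α :=
    fun ys i j => by
      simp only [softmax_rpow hα.ne' hρ, mul_div_assoc', mul_right_comm _ (μ ys), hBT ys i j]
  have hweight : ∀ ys, 0 < (∑ j, D (ys, j) * μ ys) / ∑ j, ρ (ys j) ^ α := fun ys =>
    div_pos (sum_pos (fun j _ => mul_pos (hD ys j) (hμpos ys)) univ_nonempty) (hρα ys)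
  rw [sum_deriv_update_mul_of_eq_bestOfN_loss hα.ne' (fun ys i => D (ys, i) * μ ys) hL hπ,
    sum_congr rfl fun ys _ => sum_mul_eq_mul_tupleDescent (v := fun j => π (ys j))
      (w := fun j => ρ (ys j)) (hρα ys).ne' (hBTρ ys)]
  obtain ⟨y₁, y₂, hy⟩ := exists_div_ne_div_of_sum_eq (fun y => (hπ y).ne')
    ((sum_softmax hρ).trans hsum.symm) (hsum ▸ one_ne_zero) hne
  obtain ⟨j, k, hjk⟩ := exists_pair_ne (Fin n)
  refine sum_pos' (fun ys _ => mul_nonneg (hweight ys).le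
      (tupleDescent_nonneg hα.le (fun _ => hπ _) fun _ => (hρpos _).le))
    ⟨Function.update (fun _ => y₂) j y₁, mem_univ _, mul_pos (hweight _)
      (tupleDescent_pos hα (fun _ => hπ _) (fun _ => (hρpos _).le) (j₀ := j) (k₀ := k) ?_)⟩
  simpa [Function.update_of_ne hjk.symm] using hy

/-- Descent inequality establishing SPO's Theorem 3 (best-of-n preference loss):
for every `π` in the relative interior of the probability simplex with
`π ≠ ρ = softmax (r/α)`, the gradient of the best-of-n loss `L` at `π` makes a
strictly acute angle with `π - ρ`. Partial derivatives are taken coordinatewise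
via `Function.update`. -/
theorem spo_bestofn_descent (Y : Type*) [Fintype Y] [Nonempty Y] [DecidableEq Y]
    (r : Y → ℝ) (α : ℝ) (hα : 0 < α) (n : ℕ) (hn : 2 ≤ n)
    (D : (Fin n → Y) × Fin n → ℝ) (hD : ∀ ys i, 0 < D (ys, i))
    (hBT : ∀ (ys : Fin n → Y) (i j : Fin n),
      D (ys, i) * Real.exp (r (ys j)) = D (ys, j) * Real.exp (r (ys i)))
    (μ : (Fin n → Y) → ℝ) (hμpos : ∀ ys, 0 < μ ys)
    (hμsym : ∀ (ys : Fin n → Y) (σ : Equiv.Perm (Fin n)), μ (ys ∘ σ) = μ ys)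
    (L : (Y → ℝ) → ℝ)
    (hL : ∀ p : Y → ℝ, L p = -(1 / α) *
      ∑ ys : Fin n → Y, ∑ i : Fin n, D (ys, i) * μ ys *
        Real.log ((p (ys i)) ^ α / ∑ j : Fin n, (p (ys j)) ^ α))
    (ρ : Y → ℝ) (hρ : ∀ y, ρ y = Real.exp (r y / α) / ∑ y', Real.exp (r y' / α))
    (π : Y → ℝ) (hπ : ∀ y, 0 < π y) (hsum : ∑ y, π y = 1) (hne : π ≠ ρ) :
    0 < ∑ y, deriv (fun t : ℝ => L (Function.update π y t)) (π y) * (π y - ρ y) :=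
  spo_bestofn_descent_general Y r α hα n hn D hD hBT μ hμpos L hL ρ hρ π hπ hsum hne
end

section
/- Let Y be a finite nonempty type, r : Y → ℝ, α > 0, and n ≥ 2 an integer. Define the Plackett–Luce probability p_PL(ys) = ∏_{k=0}^{n−2} exp(r(ys k)) / ∑_{j=k}^{n−1} exp(r(ys j)) for ys : Fin n → Y. Let D : (Fin n → Y) → ℝ satisfy D(ys) > 0 for all ys, and the Plackett–Luce consistency D(ys ∘ σ) * p_PL(ys ∘ σ') = D(ys ∘ σ') * p_PL(ys ∘ σ) for all ys and all permutations σ, σ' of Fin n. For each k with 0 ≤ k ≤ n−2, let μ_k : (Fin n → Y) → ℝ be strictly positive, and suppose μ_k(ys ∘ σ) = μ_k(ys) for every permutation σ of Fin n fixing every index j < k. Define L on the open set of functions π : Y → ℝ with strictly positive values by L(π) = −(1/α) * ∑_{ys} D(ys) * ∑_{k=0}^{n−2} μ_k(ys) * log( π(ys k)^α / ∑_{j=k}^{n−1} π(ys j)^α ), and let ρ(y) = exp(r(y)/α) / ∑_{y'} exp(r(y')/α). Then for every π with π(y) > 0 for all y, ∑_{y} π(y) = 1, and π ≠ ρ, it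 holds that ∑_{y} (∂L/∂π(y))(π) * (π(y) − ρ(y)) > 0. -/
/-!
Write `φ = ρ / π`. The sum is the derivative of `L` along `t ↦ π + t • (π - ρ)`, namely
`∑ k, ∑ ys, D ys * μ k ys * (φ (ys k) - m k ys)`, where `m k ys` is the mean of `φ (ys j)` over the
positions `j ≥ k`, weighted by `π (ys j) ^ α`.

Fix `k`. Permuting the positions `≥ k` changes neither `μ k`, `m k` nor `D / pPL`, so averaging the
`k`-th term over these permutations turns `φ (ys k)` into its Plackett–Luce mean: the mean of
`φ (ys j)` over `j ≥ k` weighted by `exp (r (ys j))`. As `exp r / π ^ α = (Z * φ) ^ α` (`Z` the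
softmax normaliser) increases with `φ`, Chebyshev's sum inequality puts this mean above `m k ys`,
strictly when the tail holds two responses with different values of `φ`; such responses exist
because `π ≠ ρ`.
-/

open Finset

theorem sum_deriv_update_mul_eq {ι : Type*} [Fintype ι] [DecidableEq ι] {F : (ι → ℝ) → ℝ}
    {x v : ι → ℝ} {F' : ℝ} (hF : DifferentiableAt ℝ F x)
    (hline : HasDerivAt (fun t : ℝ => F (x + t • v)) F' 0) :
    ∑ i, deriv (fun t => F (Function.update x i t)) (x i) * v i = F' := by
  have hpartial (i : ι) :
      deriv (fun t => F (Function.update x i t)) (x i) = fderiv ℝ F x (Pi.single i 1) :=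
    (hF.hasFDerivAt.comp_hasDerivAt_of_eq (x i) (hasDerivAt_update x i (x i)) (by simp)).deriv
  have hdir : HasDerivAt (fun t : ℝ => F (x + t • v)) (fderiv ℝ F x v) 0 := by
    have h := hF.hasFDerivAt.comp_hasDerivAt_of_eq (0 : ℝ)
      (((hasDerivAt_id (0 : ℝ)).smul_const v).const_add x) (by simp)
    simp only [id, one_smul] at h
    exact h
  rw [← hdir.unique hline]
  conv_rhs => rw [pi_eq_sum_univ' v]
  simp [hpartial, map_sum, mul_comm]

theorem Finset.centerMass_sub {ι R E : Type*} [Field R] [AddCommGroup E] [Module R E]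
    (t : Finset ι) (w : ι → R) (z z' : ι → E) :
    t.centerMass w (fun i => z i - z' i) = t.centerMass w z - t.centerMass w z' := by
  simp only [centerMass, smul_sub, sum_sub_distrib]

section LogRatio

variable {ι : Type*} (s : Finset ι) (hs : s.Nonempty) (i : ι) (α : ℝ)
include hs

theorem differentiableAt_log_rpow_div_sum {Y : Type*} [Fintype Y] (f : ι → Y) {p : Y → ℝ}
    (hp : ∀ y, 0 < p y) :
    DifferentiableAt ℝ (fun q : Y → ℝ => Real.log (q (f i) ^ α / ∑ j ∈ s, q (f j) ^ α)) p := by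
  have hS : 0 < ∑ j ∈ s, p (f j) ^ α := sum_pos (fun j _ => Real.rpow_pos_of_pos (hp _) α) hs
  refine DifferentiableAt.log ?_ (div_pos (Real.rpow_pos_of_pos (hp _) α) hS).ne'
  fun_prop (disch := first | exact hS.ne' | exact Or.inl (hp _).ne')

theorem hasDerivAt_log_rpow_div_sum {a : ι → ℝ} (ha : ∀ j, 0 < a j) (b : ι → ℝ) :
    HasDerivAt (fun t : ℝ => Real.log ((a i + t * b i) ^ α / ∑ j ∈ s, (a j + t * b j) ^ α))
      (α * (b i / a i - s.centerMass (fun j => a j ^ α) (fun j => b j / a j))) 0 := by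
  have hpow (j : ι) :
      HasDerivAt (fun t : ℝ => (a j + t * b j) ^ α) (α * (a j ^ α * (b j / a j))) 0 := by
    have h := ((hasDerivAt_mul_const (x := (0 : ℝ)) (b j)).const_add (a j)).rpow_const
      (p := α) (Or.inl (by simpa using (ha j).ne'))
    rw [zero_mul, add_zero, Real.rpow_sub_one (ha j).ne'] at h
    convert h using 1
    ring
  have hS : 0 < ∑ j ∈ s, a j ^ α := sum_pos (fun j _ => Real.rpow_pos_of_pos (ha j) α) hs
  have hai := Real.rpow_pos_of_pos (ha i) α
  have h := ((hpow i).div (HasDerivAt.fun_sum fun j _ => hpow j) (by simpa using hS.ne')).log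
    (by simpa using (div_pos hai hS).ne')
  simp only [zero_mul, add_zero, Pi.div_apply] at h
  convert h using 1
  simp only [centerMass, smul_eq_mul, ← mul_sum]
  field_simp

end LogRatio

section Chebyshev

variable {ι : Type*} {s : Finset ι} {u v φ : ι → ℝ}

theorem two_mul_sum_mul_sum_mul_centerMass_sub (hu : ∑ i ∈ s, u i ≠ 0)
    (hv : ∑ i ∈ s, v i ≠ 0) :
    2 * (∑ i ∈ s, u i) * (∑ i ∈ s, v i) * (s.centerMass v φ - s.centerMass u φ)
      = ∑ i ∈ s, ∑ l ∈ s, (v i * u l - u i * v l) * (φ i - φ l) := by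
  have hexpand : ∑ i ∈ s, ∑ l ∈ s, (v i * u l - u i * v l) * (φ i - φ l)
      = ∑ i ∈ s, ∑ l ∈ s, (v i * φ i * u l - u i * φ i * v l - v i * (u l * φ l)
          + u i * (v l * φ l)) :=
    sum_congr rfl fun i _ => sum_congr rfl fun l _ => by ring
  simp only [hexpand, sum_add_distrib, sum_sub_distrib, ← sum_mul_sum, centerMass, smul_eq_mul]
  field_simp
  ring

theorem cross_mul_sub_mul_nonneg {u₁ u₂ v₁ v₂ φ₁ φ₂ : ℝ} (hu₁ : 0 < u₁) (hu₂ : 0 < u₂)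
    (h₁₂ : v₁ / u₁ ≤ v₂ / u₂ → φ₁ ≤ φ₂) (h₂₁ : v₂ / u₂ ≤ v₁ / u₁ → φ₂ ≤ φ₁) :
    0 ≤ (v₁ * u₂ - u₁ * v₂) * (φ₁ - φ₂) := by
  rcases le_total (v₁ / u₁) (v₂ / u₂) with h | h
  · have := (div_le_div_iff₀ hu₁ hu₂).1 h
    exact mul_nonneg_of_nonpos_of_nonpos (by linarith) (by linarith [h₁₂ h])
  · have := (div_le_div_iff₀ hu₂ hu₁).1 h
    exact mul_nonneg (by linarith) (by linarith [h₂₁ h])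

theorem cross_mul_sub_mul_pos {u₁ u₂ v₁ v₂ φ₁ φ₂ : ℝ} (hu₁ : 0 < u₁) (hu₂ : 0 < u₂)
    (h₁₂ : v₁ / u₁ ≤ v₂ / u₂ → φ₁ ≤ φ₂) (h₂₁ : v₂ / u₂ ≤ v₁ / u₁ → φ₂ ≤ φ₁) (hφ : φ₁ ≠ φ₂) :
    0 < (v₁ * u₂ - u₁ * v₂) * (φ₁ - φ₂) := by
  rcases hφ.lt_or_gt with h | h
  · have := (div_lt_div_iff₀ hu₁ hu₂).1 (lt_of_not_ge fun h' => h.not_ge (h₂₁ h'))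
    exact mul_pos_of_neg_of_neg (by linarith) (by linarith)
  · have := (div_lt_div_iff₀ hu₂ hu₁).1 (lt_of_not_ge fun h' => h.not_ge (h₁₂ h'))
    exact mul_pos (by linarith) (by linarith)

variable (hu : ∀ i ∈ s, 0 < u i) (hv : ∀ i ∈ s, 0 < v i)
  (hφ : ∀ i ∈ s, ∀ l ∈ s, v i / u i ≤ v l / u l → φ i ≤ φ l)
include hu hv hφ

theorem Finset.centerMass_le_centerMass_of_monotone_ratio :
    s.centerMass u φ ≤ s.centerMass v φ := by
  rcases s.eq_empty_or_nonempty with rfl | hs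
  · rw [centerMass_empty, centerMass_empty]
  have hU := sum_pos hu hs
  have hV := sum_pos hv hs
  rw [← sub_nonneg, ← mul_nonneg_iff_of_pos_left
    (by positivity : (0 : ℝ) < 2 * (∑ i ∈ s, u i) * ∑ i ∈ s, v i),
    two_mul_sum_mul_sum_mul_centerMass_sub hU.ne' hV.ne']
  exact sum_nonneg fun i hi => sum_nonneg fun l hl =>
    cross_mul_sub_mul_nonneg (hu i hi) (hu l hl) (hφ i hi l hl) (hφ l hl i hi)

theorem Finset.centerMass_lt_centerMass_of_monotone_ratio
    (hne : ∃ i ∈ s, ∃ l ∈ s, φ i ≠ φ l) : s.centerMass u φ < s.centerMass v φ := by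
  obtain ⟨i, hi, l, hl, hil⟩ := hne
  have hU := sum_pos hu ⟨i, hi⟩
  have hV := sum_pos hv ⟨i, hi⟩
  rw [← sub_pos, ← mul_pos_iff_of_pos_left
    (by positivity : (0 : ℝ) < 2 * (∑ i ∈ s, u i) * ∑ i ∈ s, v i),
    two_mul_sum_mul_sum_mul_centerMass_sub hU.ne' hV.ne']
  have hpair : ∀ i ∈ s, ∀ l ∈ s, 0 ≤ (v i * u l - u i * v l) * (φ i - φ l) := fun i hi l hl =>
    cross_mul_sub_mul_nonneg (hu i hi) (hu l hl) (hφ i hi l hl) (hφ l hl i hi)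
  exact sum_pos' (fun i' hi' => sum_nonneg (hpair i' hi')) ⟨i, hi, sum_pos' (hpair i hi)
    ⟨l, hl, cross_mul_sub_mul_pos (hu i hi) (hu l hl) (hφ i hi l hl) (hφ l hl i hi) hil⟩⟩

end Chebyshev

theorem exp_div_rpow_eq {x p α : ℝ} (hp : 0 < p) (hα : α ≠ 0) :
    Real.exp x / p ^ α = (Real.exp (x / α) / p) ^ α := by
  rw [Real.div_rpow (Real.exp_pos _).le hp.le, ← Real.exp_mul, div_mul_cancel₀ _ hα]

theorem div_le_div_of_exp_div_rpow_le {α Z x₁ x₂ p₁ p₂ : ℝ} (hα : 0 < α) (hZ : 0 < Z)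
    (hp₁ : 0 < p₁) (hp₂ : 0 < p₂) (h : Real.exp x₁ / p₁ ^ α ≤ Real.exp x₂ / p₂ ^ α) :
    Real.exp (x₁ / α) / Z / p₁ ≤ Real.exp (x₂ / α) / Z / p₂ := by
  rw [exp_div_rpow_eq hp₁ hα.ne', exp_div_rpow_eq hp₂ hα.ne',
    Real.rpow_le_rpow_iff (by positivity) (by positivity) hα] at h
  rw [div_right_comm (Real.exp (x₁ / α)), div_right_comm (Real.exp (x₂ / α))]
  exact div_le_div_of_nonneg_right h hZ.le

theorem exists_div_ne_div_of_ne {Y : Type*} [Fintype Y] {π ρ : Y → ℝ} (hπ : ∀ y, 0 < π y)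
    (hsum : ∑ y, π y = ∑ y, ρ y) (hne : π ≠ ρ) : ∃ a b, ρ a / π a ≠ ρ b / π b := by
  obtain ⟨a, ha⟩ := Function.ne_iff.1 hne
  by_contra! h
  have hρ (y : Y) : ρ y = ρ a / π a * π y := by rw [h a y, div_mul_cancel₀ _ (hπ y).ne']
  rw [sum_congr rfl fun y _ => hρ y, ← mul_sum, eq_comm,
    mul_eq_right₀ (sum_pos (fun y _ => hπ y) ⟨a, mem_univ a⟩).ne', div_eq_one_iff_eq (hπ a).ne']
    at hsum
  exact ha hsum.symm

namespace PlackettLuce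

variable {n : ℕ}

def tail (n k : ℕ) : Finset (Fin n) := univ.filter fun j => k ≤ (j : ℕ)

def fixingBelow (n k : ℕ) : Finset (Equiv.Perm (Fin n)) :=
  univ.filter fun σ => ∀ j : Fin n, (j : ℕ) < k → σ j = j

/-- The Plackett–Luce probability, under the weights `w`, of ranking the positions
`k, k + 1, …, n - 1` in this order. -/
noncomputable def tailProb (k : ℕ) (w : Fin n → ℝ) : ℝ :=
  ∏ m ∈ tail n k, w m / ∑ i ∈ tail n m, w i

noncomputable def headProb (k : ℕ) (w : Fin n → ℝ) : ℝ :=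
  ∏ m ∈ univ.filter (fun m : Fin n => (m : ℕ) < k), w m / ∑ i ∈ tail n m, w i

noncomputable def prob (w : Fin n → ℝ) : ℝ :=
  ∏ m, w m / ∑ i ∈ tail n m, w i

@[simp] theorem mem_tail {k : ℕ} {j : Fin n} : j ∈ tail n k ↔ k ≤ (j : ℕ) := by simp [tail]

@[simp] theorem mem_fixingBelow {k : ℕ} {σ : Equiv.Perm (Fin n)} :
    σ ∈ fixingBelow n k ↔ ∀ j : Fin n, (j : ℕ) < k → σ j = j := by simp [fixingBelow]

theorem sum_tail_pos {k : ℕ} (hk : k < n) {w : Fin n → ℝ} (hw : ∀ i, 0 < w i) :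
    0 < ∑ i ∈ tail n k, w i :=
  sum_pos (fun i _ => hw i) ⟨⟨k, hk⟩, by simp⟩

theorem headProb_pos {k : ℕ} {w : Fin n → ℝ} (hw : ∀ i, 0 < w i) : 0 < headProb k w :=
  prod_pos fun m _ => div_pos (hw m) (sum_tail_pos m.isLt hw)

theorem prob_pos {w : Fin n → ℝ} (hw : ∀ i, 0 < w i) : 0 < prob w :=
  prod_pos fun m _ => div_pos (hw m) (sum_tail_pos m.isLt hw)

theorem filter_le_eq_tail (k : Fin n) : univ.filter (fun j => k ≤ j) = tail n k := by
  ext j; simp only [mem_filter, mem_univ, true_and, mem_tail, Fin.le_def]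

theorem tail_eq_insert {k : ℕ} (hk : k < n) : tail n k = insert ⟨k, hk⟩ (tail n (k + 1)) := by
  ext j; simp only [mem_tail, Finset.mem_insert, Fin.ext_iff]; omega

section fixingBelow

variable {k c : ℕ} {σ : Equiv.Perm (Fin n)}

theorem val_apply_lt_iff (hσ : σ ∈ fixingBelow n k) (hc : c ≤ k) (i : Fin n) :
    (σ i : ℕ) < c ↔ (i : ℕ) < c := by
  refine ⟨fun h => ?_, fun h => by rwa [mem_fixingBelow.1 hσ i (by omega)]⟩
  rwa [← σ.injective (mem_fixingBelow.1 hσ (σ i) (by omega))]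

theorem sum_tail_comp (hσ : σ ∈ fixingBelow n k) (hc : c ≤ k) (f : Fin n → ℝ) :
    ∑ i ∈ tail n c, f (σ i) = ∑ i ∈ tail n c, f i :=
  sum_equiv σ (fun i => by simp only [mem_tail, ← not_lt, val_apply_lt_iff hσ hc]) fun _ _ => rfl

theorem headProb_comp (hσ : σ ∈ fixingBelow n k) (w : Fin n → ℝ) :
    headProb k (w ∘ σ) = headProb k w := by
  refine prod_congr rfl fun m hm => ?_
  have hm : (m : ℕ) < k := by simpa using hm
  simp only [Function.comp_apply, mem_fixingBelow.1 hσ m hm, sum_tail_comp hσ hm.le]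

end fixingBelow

theorem headProb_mul_tailProb (k : ℕ) (w : Fin n → ℝ) : headProb k w * tailProb k w = prob w := by
  rw [headProb, tailProb, prob,
    ← prod_filter_mul_prod_filter_not univ (fun m : Fin n => (m : ℕ) < k)]
  congr 2
  ext m; simp

theorem tailProb_eq_mul {k : ℕ} (hk : k < n) (w : Fin n → ℝ) :
    tailProb k w = w ⟨k, hk⟩ / (∑ i ∈ tail n k, w i) * tailProb (k + 1) w := by
  rw [tailProb, tail_eq_insert hk, prod_insert (by simp), ← tail_eq_insert hk, tailProb]

theorem swap_mul_mem_fixingBelow_succ {k : Fin n} {σ : Equiv.Perm (Fin n)}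
    (hσ : σ ∈ fixingBelow n k) : Equiv.swap k (σ k) * σ ∈ fixingBelow n (k + 1) := by
  rw [mem_fixingBelow] at hσ ⊢
  intro i hi
  rcases Nat.lt_succ_iff_lt_or_eq.1 hi with hik | hik
  · have hki : k ≠ i := fun h => by omega
    have hσki : σ k ≠ i := fun h => hki (σ.injective (h.trans (hσ i hik).symm))
    simp [Equiv.Perm.mul_apply, hσ i hik, Equiv.swap_apply_of_ne_of_ne hki.symm hσki.symm]
  · obtain rfl : i = k := Fin.ext hik
    simp

theorem swap_mul_mem_fixingBelow {k j : Fin n} (hj : j ∈ tail n k) {τ : Equiv.Perm (Fin n)}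
    (hτ : τ ∈ fixingBelow n (k + 1)) :
    Equiv.swap k j * τ ∈ fixingBelow n k ∧ (Equiv.swap k j * τ) k = j := by
  rw [mem_fixingBelow] at hτ ⊢
  rw [mem_tail] at hj
  refine ⟨fun i hi => ?_, by simp [hτ k (by omega)]⟩
  have hki : i ≠ k := fun h => by subst h; omega
  have hji : i ≠ j := fun h => by subst h; omega
  simp [Equiv.Perm.mul_apply, hτ i (by omega), Equiv.swap_apply_of_ne_of_ne hki hji]

/- Sorting `σ` by `j = σ k`, the map `σ ↦ swap k j * σ` identifies the permutations with
`σ k = j` with `fixingBelow n (k + 1)` and splits off the first factor `w j / ∑ w` of `tailProb k`.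
Assuming the normalisation one level down lets the induction in `sum_tailProb_comp_eq_one` use
this lemma. -/
theorem sum_tailProb_comp_mul_apply_of_succ (k : Fin n) {w : Fin n → ℝ} (hw : ∀ i, 0 < w i)
    (hnorm : ∀ w' : Fin n → ℝ, (∀ i, 0 < w' i) →
      ∑ τ ∈ fixingBelow n (k + 1), tailProb (k + 1) (w' ∘ τ) = 1)
    (h : Fin n → ℝ) :
    ∑ σ ∈ fixingBelow n k, tailProb k (w ∘ σ) * h (σ k) = (tail n k).centerMass w h := by
  rw [← sum_fiberwise_of_maps_to (g := fun σ => σ k) (t := tail n k)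
    fun σ hσ => mem_tail.2 (not_lt.1 fun h => lt_irrefl _ ((val_apply_lt_iff hσ le_rfl k).1 h))]
  rw [centerMass, smul_eq_mul, mul_sum]
  refine sum_congr rfl fun j hj => ?_
  calc ∑ σ ∈ (fixingBelow n k).filter (fun σ => σ k = j), tailProb k (w ∘ σ) * h (σ k)
      = ∑ τ ∈ fixingBelow n (k + 1),
          w j / (∑ i ∈ tail n k, w i) * h j * tailProb (k + 1) ((w ∘ Equiv.swap k j) ∘ τ) := by
        refine sum_nbij' (Equiv.swap k j * ·) (Equiv.swap k j * ·) (fun σ hσ => ?_)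
          (fun τ hτ => ?_) (fun σ _ => Equiv.swap_mul_self_mul k j σ)
          (fun τ _ => Equiv.swap_mul_self_mul k j τ) (fun σ hσ => ?_)
        · rw [mem_filter] at hσ
          simpa [← hσ.2] using swap_mul_mem_fixingBelow_succ hσ.1
        · simpa using swap_mul_mem_fixingBelow hj hτ
        · rw [mem_filter] at hσ
          have hcomp : (w ∘ Equiv.swap k j) ∘ (Equiv.swap k j * σ) = w ∘ σ := by
            ext i; simp
          rw [hcomp, tailProb_eq_mul k.isLt]
          simp only [Fin.eta, Function.comp_apply, hσ.2, sum_tail_comp hσ.1 le_rfl]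
          ring
    _ = (∑ i ∈ tail n k, w i)⁻¹ * (w j • h j) := by
        rw [← mul_sum, hnorm (w ∘ Equiv.swap k j) fun i => hw _, smul_eq_mul]
        ring

theorem sum_tailProb_comp_eq_one {k : ℕ} (hk : k ≤ n) {w : Fin n → ℝ} (hw : ∀ i, 0 < w i) :
    ∑ σ ∈ fixingBelow n k, tailProb k (w ∘ σ) = 1 := by
  induction hk using Nat.decreasingInduction generalizing w with
  | self =>
    have hfix : fixingBelow n n = {1} := by
      ext σ; simp [Equiv.ext_iff]
    have htail : tail n n = ∅ := by
      ext j; simp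
    simp [hfix, htail, tailProb]
  | of_succ k hk ih =>
    have h := sum_tailProb_comp_mul_apply_of_succ ⟨k, hk⟩ hw (fun w' hw' => ih hw')
      (Function.const _ 1)
    simp only [Function.const_apply, mul_one] at h
    rwa [centerMass_const (sum_tail_pos hk hw).ne'] at h

theorem sum_tailProb_comp_mul_apply (k : Fin n) {w : Fin n → ℝ} (hw : ∀ i, 0 < w i)
    (h : Fin n → ℝ) :
    ∑ σ ∈ fixingBelow n k, tailProb k (w ∘ σ) * h (σ k) = (tail n k).centerMass w h :=
  sum_tailProb_comp_mul_apply_of_succ k hw (fun _ hw' => sum_tailProb_comp_eq_one k.isLt hw') h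

theorem tailProb_pred_eq_one {w : Fin n → ℝ} (hw : ∀ i, w i ≠ 0) : tailProb (n - 1) w = 1 := by
  cases n with
  | zero => rw [tailProb, eq_empty_of_isEmpty (tail 0 0), prod_empty]
  | succ m =>
    have hlast : tail (m + 1) m = {Fin.last m} := by
      ext j
      rw [mem_tail, mem_singleton, Fin.ext_iff, Fin.val_last]
      have := j.isLt
      omega
    simp [tailProb, hlast, hw]

theorem prod_filter_lt_pred_eq_prob {w : Fin n → ℝ} (hw : ∀ i, w i ≠ 0) :
    ∏ m ∈ univ.filter (fun m : Fin n => (m : ℕ) < n - 1),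
      w m / ∑ j ∈ univ.filter (fun j => m ≤ j), w j = prob w := by
  rw [← headProb_mul_tailProb (n - 1), tailProb_pred_eq_one hw, mul_one]
  simp only [filter_le_eq_tail, headProb]

section Tuples

variable {Y : Type*} [Fintype Y]

theorem sum_comp_perm {M : Type*} [AddCommMonoid M] (σ : Equiv.Perm (Fin n))
    (f : (Fin n → Y) → M) : ∑ ys, f (ys ∘ σ) = ∑ ys, f ys :=
  (σ.symm.arrowCongr (Equiv.refl Y)).sum_comp f

theorem card_mul_sum_prob_mul (k : Fin n) {w : Y → ℝ} (hw : ∀ y, 0 < w y)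
    (F : (Fin n → Y) → Y → ℝ) (hF : ∀ ys, ∀ σ ∈ fixingBelow n k, F (ys ∘ σ) = F ys) :
    #(fixingBelow n k) * ∑ ys, prob (w ∘ ys) * F ys (ys k)
      = ∑ ys, headProb k (w ∘ ys) * (tail n k).centerMass (w ∘ ys) (fun j => F ys (ys j)) := by
  calc #(fixingBelow n k) * ∑ ys, prob (w ∘ ys) * F ys (ys k)
      = ∑ σ ∈ fixingBelow n k, ∑ ys, prob (w ∘ ys ∘ σ) * F (ys ∘ σ) (ys (σ k)) := by
        rw [← nsmul_eq_mul, ← sum_const]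
        exact sum_congr rfl fun σ _ => (sum_comp_perm σ fun ys => prob (w ∘ ys) * F ys (ys k)).symm
    _ = ∑ ys, headProb k (w ∘ ys) *
          ∑ σ ∈ fixingBelow n k, tailProb k ((w ∘ ys) ∘ σ) * F ys (ys (σ k)) := by
        rw [sum_comm]
        refine sum_congr rfl fun ys _ => ?_
        rw [mul_sum]
        refine sum_congr rfl fun σ hσ => ?_
        rw [← headProb_mul_tailProb k, hF ys σ hσ]
        rw [show w ∘ ys ∘ σ = (w ∘ ys) ∘ σ from rfl, headProb_comp hσ]
        ring
    _ = _ := by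
        refine sum_congr rfl fun ys _ => ?_
        rw [sum_tailProb_comp_mul_apply (w := w ∘ ys) k (fun i => hw (ys i)) fun j => F ys (ys j)]

theorem sum_prob_mul_sub_centerMass_pos (k : Fin n) (hk : (k : ℕ) + 1 < n) {e u : Y → ℝ}
    (he : ∀ y, 0 < e y) (hu : ∀ y, 0 < u y) {φ : Y → ℝ}
    (hφ : ∀ a b, e a / u a ≤ e b / u b → φ a ≤ φ b) (hne : ∃ a b, φ a ≠ φ b)
    {c : (Fin n → Y) → ℝ} (hc : ∀ ys, 0 < c ys)
    (hcσ : ∀ ys, ∀ σ ∈ fixingBelow n k, c (ys ∘ σ) = c ys) :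
    0 < ∑ ys, prob (e ∘ ys) * (c ys * (φ (ys k) - (tail n k).centerMass (u ∘ ys) (φ ∘ ys))) := by
  set m : (Fin n → Y) → ℝ := fun ys => (tail n k).centerMass (u ∘ ys) (φ ∘ ys) with hm
  change 0 < ∑ ys, prob (e ∘ ys) * (c ys * (φ (ys k) - m ys))
  have hmσ (ys : Fin n → Y) : ∀ σ ∈ fixingBelow n k, m (ys ∘ σ) = m ys := fun σ hσ => by
    simp only [hm, centerMass, Function.comp_apply, sum_tail_comp hσ le_rfl (fun i => u (ys i)),
      sum_tail_comp hσ le_rfl (fun i => u (ys i) • φ (ys i))]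
  have hsym := card_mul_sum_prob_mul k he (fun ys y => c ys * (φ y - m ys))
    (fun ys σ hσ => by simp only [hcσ ys σ hσ, hmσ ys σ hσ])
  refine pos_of_mul_pos_right ?_ (Nat.cast_nonneg #(fixingBelow n k))
  rw [hsym]
  have hterm (ys : Fin n → Y) : (tail n k).centerMass (e ∘ ys) (fun j => c ys * (φ (ys j) - m ys))
      = c ys * ((tail n k).centerMass (e ∘ ys) (φ ∘ ys) - m ys) := by
    refine (centerMass_smul (c ys) (tail n k) fun j => φ (ys j) - m ys).trans ?_
    rw [centerMass_sub, smul_eq_mul]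
    congr 2
    exact centerMass_const (sum_tail_pos k.isLt fun j => he (ys j)).ne' _
  obtain ⟨a, b, hab⟩ := hne
  refine sum_pos' (fun ys _ => ?_) ⟨fun j => if j = k then a else b, mem_univ _, ?_⟩
  · rw [hterm]
    exact mul_nonneg (headProb_pos fun j => he (ys j)).le (mul_nonneg (hc ys).le (sub_nonneg.2
      (centerMass_le_centerMass_of_monotone_ratio (fun j _ => hu _) (fun j _ => he _)
        fun i _ l _ => hφ _ _)))
  · rw [hterm]
    refine mul_pos (headProb_pos fun j => he _) (mul_pos (hc _) (sub_pos.2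
      (centerMass_lt_centerMass_of_monotone_ratio (fun j _ => hu _) (fun j _ => he _)
        (fun i _ l _ => hφ _ _) ⟨k, by simp, ⟨(k : ℕ) + 1, hk⟩, by simp, ?_⟩)))
    simpa [Fin.ext_iff] using hab

theorem sum_mul_mul_sub_centerMass_pos (k : Fin n) (hk : (k : ℕ) + 1 < n) {e u : Y → ℝ}
    (he : ∀ y, 0 < e y) (hu : ∀ y, 0 < u y) {φ : Y → ℝ}
    (hφ : ∀ a b, e a / u a ≤ e b / u b → φ a ≤ φ b) (hne : ∃ a b, φ a ≠ φ b)
    {D c : (Fin n → Y) → ℝ} (hD : ∀ ys, 0 < D ys)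
    (hDσ : ∀ ys (σ : Equiv.Perm (Fin n)), D (ys ∘ σ) * prob (e ∘ ys) = D ys * prob (e ∘ ys ∘ σ))
    (hc : ∀ ys, 0 < c ys) (hcσ : ∀ ys, ∀ σ ∈ fixingBelow n k, c (ys ∘ σ) = c ys) :
    0 < ∑ ys, D ys * c ys * (φ (ys k) - (tail n k).centerMass (u ∘ ys) (φ ∘ ys)) := by
  have hprob (ys : Fin n → Y) : 0 < prob (e ∘ ys) := prob_pos fun j => he (ys j)
  refine (sum_prob_mul_sub_centerMass_pos k hk he hu hφ hne
    (c := fun ys => D ys / prob (e ∘ ys) * c ys)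
    (fun ys => mul_pos (div_pos (hD ys) (hprob ys)) (hc ys)) (fun ys σ hσ => ?_)).trans_eq
    (sum_congr rfl fun ys _ => ?_)
  · rw [hcσ ys σ hσ]
    congr 1
    rw [div_eq_div_iff (hprob _).ne' (hprob _).ne', hDσ]
  · field_simp [(hprob ys).ne']

end Tuples

end PlackettLuce

namespace SPO

open PlackettLuce

variable {Y : Type*} [Fintype Y] {n : ℕ}

noncomputable def rankingLoss (α : ℝ) (D : (Fin n → Y) → ℝ) (μ : Fin n → (Fin n → Y) → ℝ)
    (K : Finset (Fin n)) (p : Y → ℝ) : ℝ :=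
  -(1 / α) * ∑ ys, D ys * ∑ k ∈ K, μ k ys * Real.log (p (ys k) ^ α / ∑ j ∈ tail n k, p (ys j) ^ α)

variable (α : ℝ) (D : (Fin n → Y) → ℝ) (μ : Fin n → (Fin n → Y) → ℝ) (K : Finset (Fin n))
  {p : Y → ℝ} (hp : ∀ y, 0 < p y)
include hp

theorem differentiableAt_rankingLoss : DifferentiableAt ℝ (rankingLoss α D μ K) p :=
  DifferentiableAt.const_mul (DifferentiableAt.fun_sum fun ys _ =>
    DifferentiableAt.const_mul (DifferentiableAt.fun_sum fun k _ =>
      (differentiableAt_log_rpow_div_sum _ ⟨k, by simp⟩ k α ys hp).const_mul _) _) _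

theorem hasDerivAt_rankingLoss_add_smul_sub (hα : α ≠ 0) (q : Y → ℝ) :
    HasDerivAt (fun t : ℝ => rankingLoss α D μ K (p + t • (p - q)))
      (∑ k ∈ K, ∑ ys, D ys * μ k ys *
        ((q / p) (ys k) - (tail n k).centerMass ((fun y => p y ^ α) ∘ ys) ((q / p) ∘ ys))) 0 := by
  simp only [rankingLoss, Pi.add_apply, Pi.smul_apply, Pi.sub_apply, smul_eq_mul]
  refine ((HasDerivAt.fun_sum fun ys _ => (HasDerivAt.fun_sum fun (k : Fin n) _ =>
    (hasDerivAt_log_rpow_div_sum (tail n k) ⟨k, by simp⟩ k α (a := fun j => p (ys j))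
      (fun j => hp _) (fun j => p (ys j) - q (ys j))).const_mul (μ k ys)).const_mul
        (D ys)).const_mul (-(1 / α))).congr_deriv ?_
  have hratio (y : Y) : (p y - q y) / p y = 1 - (q / p) y := by
    rw [Pi.div_apply, sub_div, div_self (hp y).ne']
  simp only [hratio, mul_sum, Function.comp_def]
  rw [sum_comm]
  refine sum_congr rfl fun k _ => sum_congr rfl fun ys _ => ?_
  have hmean_one : (tail n k).centerMass (fun j => p (ys j) ^ α) (fun _ => (1 : ℝ)) = 1 :=
    centerMass_const (sum_tail_pos k.isLt fun j => Real.rpow_pos_of_pos (hp (ys j)) α).ne' 1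
  rw [centerMass_sub, hmean_one]
  field_simp
  ring

end SPO

open PlackettLuce SPO in
/-- Descent inequality establishing SPO's Theorem 4 (ranking loss under the
Plackett–Luce model): for every `π` in the relative interior of the probability
simplex with `π ≠ ρ = softmax (r/α)`, the gradient of the ranking loss `L` at `π`
makes a strictly acute angle with `π - ρ`. Partial derivatives are taken
coordinatewise via `Function.update`. -/
theorem spo_ranking_descent (Y : Type*) [Fintype Y] [Nonempty Y] [DecidableEq Y]
    (r : Y → ℝ) (α : ℝ) (hα : 0 < α) (n : ℕ) (hn : 2 ≤ n)
    (pPL : (Fin n → Y) → ℝ)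
    (hpPL : ∀ ys : Fin n → Y, pPL ys =
      ∏ k ∈ Finset.univ.filter (fun k : Fin n => (k : ℕ) < n - 1),
        Real.exp (r (ys k)) /
          ∑ j ∈ Finset.univ.filter (fun j : Fin n => k ≤ j), Real.exp (r (ys j)))
    (D : (Fin n → Y) → ℝ) (hD : ∀ ys, 0 < D ys)
    (hPL : ∀ (ys : Fin n → Y) (σ σ' : Equiv.Perm (Fin n)),
      D (ys ∘ σ) * pPL (ys ∘ σ') = D (ys ∘ σ') * pPL (ys ∘ σ))
    (μ : Fin n → (Fin n → Y) → ℝ)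
    (hμpos : ∀ k : Fin n, (k : ℕ) < n - 1 → ∀ ys, 0 < μ k ys)
    (hμsym : ∀ k : Fin n, (k : ℕ) < n - 1 → ∀ (ys : Fin n → Y)
      (σ : Equiv.Perm (Fin n)), (∀ j : Fin n, j < k → σ j = j) →
      μ k (ys ∘ σ) = μ k ys)
    (L : (Y → ℝ) → ℝ)
    (hL : ∀ p : Y → ℝ, L p = -(1 / α) *
      ∑ ys : Fin n → Y, D ys *
        ∑ k ∈ Finset.univ.filter (fun k : Fin n => (k : ℕ) < n - 1),
          μ k ys * Real.log ((p (ys k)) ^ α /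
            ∑ j ∈ Finset.univ.filter (fun j : Fin n => k ≤ j), (p (ys j)) ^ α))
    (ρ : Y → ℝ) (hρ : ∀ y, ρ y = Real.exp (r y / α) / ∑ y', Real.exp (r y' / α))
    (π : Y → ℝ) (hπ : ∀ y, 0 < π y) (hsum : ∑ y, π y = 1) (hne : π ≠ ρ) :
    0 < ∑ y, deriv (fun t : ℝ => L (Function.update π y t)) (π y) * (π y - ρ y) := by
  have hZ : 0 < ∑ y, Real.exp (r y / α) := sum_pos (fun _ _ => Real.exp_pos _) univ_nonempty
  have hρsum : ∑ y, ρ y = 1 := by simp only [hρ, ← sum_div, div_self hZ.ne']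
  have hpPL' (ys : Fin n → Y) : pPL ys = prob ((fun y => Real.exp (r y)) ∘ ys) :=
    (hpPL ys).trans (prod_filter_lt_pred_eq_prob fun _ => (Real.exp_pos _).ne')
  have hL' : L = rankingLoss α D μ (univ.filter fun k : Fin n => (k : ℕ) < n - 1) :=
    funext fun p => by simp only [hL, rankingLoss, filter_le_eq_tail]
  rw [show ∑ y, _ * (π y - ρ y) = _ from sum_deriv_update_mul_eq
    (hL' ▸ differentiableAt_rankingLoss α D μ _ hπ)
    (hL' ▸ hasDerivAt_rankingLoss_add_smul_sub α D μ _ hπ hα.ne' ρ)]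
  obtain ⟨a, b, hab⟩ := exists_div_ne_div_of_ne hπ (hsum.trans hρsum.symm) hne
  refine sum_pos (fun k hk => ?_) ⟨⟨0, by omega⟩, by simp; omega⟩
  have hk : (k : ℕ) < n - 1 := by simpa using hk
  exact sum_mul_mul_sub_centerMass_pos k (by omega) (fun y => Real.exp_pos (r y))
    (fun y => Real.rpow_pos_of_pos (hπ y) α)
    (fun a b h => by simpa only [Pi.div_apply, hρ] using
      div_le_div_of_exp_div_rpow_le hα hZ (hπ a) (hπ b) h)
    ⟨a, b, hab⟩ hD
    (fun ys σ => by simpa only [Equiv.Perm.coe_one, Function.comp_id, hpPL'] using hPL ys σ 1)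
    (hμpos k hk) (fun ys σ hσ => hμsym k hk ys σ fun j hj => mem_fixingBelow.1 hσ j hj)
end

section
/- Let Y be a finite nonempty type and r : Y → ℝ. For α > 0, let ρ_α(y) = exp(r(y)/α) / ∑_{y'} exp(r(y')/α), and let H(α) = −∑_{y} ρ_α(y) * log(ρ_α(y)) denote its Shannon entropy. Then H is monotone nondecreasing on (0, ∞): for all 0 < α₁ ≤ α₂, H(α₁) ≤ H(α₂). -/
open Finset Real

/-- Gibbs' inequality: cross entropy is at least entropy. -/
lemma gibbs_aux {Y : Type*} [Fintype Y] (p q : Y → ℝ)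
    (hp : ∀ y, 0 < p y) (hq : ∀ y, 0 < q y)
    (hps : ∑ y, p y = 1) (hqs : ∑ y, q y = 1) :
    ∑ y, p y * Real.log (q y) ≤ ∑ y, p y * Real.log (p y) := by
  have key : ∀ y : Y, p y * Real.log (q y) - p y * Real.log (p y) ≤ q y - p y := by
    intro y
    have h1 : Real.log (q y / p y) ≤ q y / p y - 1 :=
      Real.log_le_sub_one_of_pos (div_pos (hq y) (hp y))
    have h2 : Real.log (q y / p y) = Real.log (q y) - Real.log (p y) :=
      Real.log_div (hq y).ne' (hp y).ne'
    have h3 := mul_le_mul_of_nonneg_left h1 (hp y).le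
    rw [h2] at h3
    have h4 : p y * (q y / p y - 1) = q y - p y := by
      rw [mul_sub, mul_div_cancel₀ _ (hp y).ne', mul_one]
    nlinarith [h3, h4]
  have hsum := Finset.sum_le_sum (fun y (_ : y ∈ Finset.univ) => key y)
  rw [Finset.sum_sub_distrib] at hsum
  have : ∑ y, (q y - p y) = 0 := by rw [Finset.sum_sub_distrib, hps, hqs]; ring
  linarith

/-- The Shannon entropy of the softmax distribution `ρ α = softmax (r/α)` is
monotone nondecreasing in the temperature `α` on `(0, ∞)`. -/
theorem softmax_entropy_monotone (Y : Type*) [Fintype Y] [Nonempty Y] (r : Y → ℝ)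
    (ρ : ℝ → Y → ℝ)
    (hρ : ∀ (α : ℝ) (y : Y), ρ α y = Real.exp (r y / α) / ∑ y', Real.exp (r y' / α))
    (H : ℝ → ℝ) (hH : ∀ α : ℝ, H α = -∑ y, ρ α y * Real.log (ρ α y))
    (α₁ α₂ : ℝ) (hα₁ : 0 < α₁) (h12 : α₁ ≤ α₂) :
    H α₁ ≤ H α₂ := by
  rcases eq_or_lt_of_le h12 with rfl | hlt
  · exact le_refl _
  set Z : ℝ → ℝ := fun α => ∑ y', Real.exp (r y' / α) with hZ
  have hZpos : ∀ α, 0 < Z α :=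
    fun α => Finset.sum_pos (fun y _ => Real.exp_pos _) Finset.univ_nonempty
  have hρpos : ∀ α y, 0 < ρ α y := by
    intro α y; rw [hρ]; exact div_pos (Real.exp_pos _) (hZpos α)
  have hρsum : ∀ α, ∑ y, ρ α y = 1 := by
    intro α
    simp only [hρ]
    rw [← Finset.sum_div, div_self (hZpos α).ne']
  have hlog : ∀ α y, Real.log (ρ α y) = r y / α - Real.log (Z α) := by
    intro α y
    rw [hρ, Real.log_div (Real.exp_ne_zero _) (hZpos α).ne', Real.log_exp]
  -- expansion lemma
  have expand : ∀ (β γ : ℝ) , ∑ y, ρ β y * Real.log (ρ γ y)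
      = (∑ y, ρ β y * r y) / γ - Real.log (Z γ) := by
    intro β γ
    calc ∑ y, ρ β y * Real.log (ρ γ y)
        = ∑ y, (ρ β y * r y / γ - ρ β y * Real.log (Z γ)) := by
          refine Finset.sum_congr rfl fun y _ => ?_
          rw [hlog γ y]; ring
      _ = (∑ y, ρ β y * r y) / γ - Real.log (Z γ) := by
          rw [Finset.sum_sub_distrib, ← Finset.sum_div, ← Finset.sum_mul, hρsum, one_mul]
  set A : ℝ := ∑ y, ρ α₁ y * r y with hA
  set B : ℝ := ∑ y, ρ α₂ y * r y with hB
  have g1 := gibbs_aux (ρ α₁) (ρ α₂) (hρpos α₁) (hρpos α₂) (hρsum α₁) (hρsum α₂)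
  have g2 := gibbs_aux (ρ α₂) (ρ α₁) (hρpos α₂) (hρpos α₁) (hρsum α₂) (hρsum α₁)
  rw [expand α₁ α₂, expand α₁ α₁] at g1
  rw [expand α₂ α₁, expand α₂ α₂] at g2
  -- g1 : A/α₂ - log Z₂ ≤ A/α₁ - log Z₁
  -- g2 : B/α₁ - log Z₁ ≤ B/α₂ - log Z₂
  have hα₂ : 0 < α₂ := lt_trans hα₁ hlt
  have hBA : B ≤ A := by
    by_contra hcon
    push_neg at hcon
    have hd : 0 < 1/α₁ - 1/α₂ := by
      have := one_div_lt_one_div_of_lt hα₁ hlt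
      linarith
    have := mul_lt_mul_of_pos_right hcon hd
    have e1 : A * (1/α₁ - 1/α₂) = A/α₁ - A/α₂ := by ring
    have e2 : B * (1/α₁ - 1/α₂) = B/α₁ - B/α₂ := by ring
    rw [e1, e2] at this
    linarith
  have hdiv : B / α₂ ≤ A / α₂ := by gcongr
  rw [hH, hH, expand α₁ α₁, expand α₂ α₂]
  linarith
end

section
/- Let Y be a finite nonempty type, α > 0 a real, and let D, μ : Y × Y → ℝ be arbitrary functions. Define L on the open set of functions π : Y → ℝ with strictly positive values by L(π) = −(1/α) * ∑_{(y₁, y₂) ∈ Y × Y} D(y₁, y₂) * μ(y₁, y₂) * log( π(y₁)^α / (π(y₁)^α + π(y₂)^α) ). Then for every such π and every y ∈ Y, the partial derivative of L with respect to the coordinate π(y) at π equals −(1/π(y)) * ∑_{y'} ( D(y, y') * μ(y, y') * π(y')^α − D(y', y) * μ(y', y) * π(y)^α ) / ( π(y)^α + π(y')^α ). -/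
/-!
Writing `u = π y₁`, `v = π y₂`, the pair term `log (u ^ α / (u ^ α + v ^ α))` has derivative
`α v ^ α / (u ^ α + v ^ α) * (u' / u - v' / v)` along any curve. Moving only the coordinate `y`,
`u' / u - v' / v` is `1 / π y` on pairs `(y, z)`, `-1 / π y` on pairs `(z, y)` and `0` elsewhere
(it vanishes on `(y, y)`), and the factor `α` cancels the `1 / α` of the loss.
-/

open Finset

theorem HasDerivAt.log_rpow_div_rpow_add_rpow {f g : ℝ → ℝ} {f' g' x : ℝ} (α : ℝ)
    (hf : HasDerivAt f f' x) (hg : HasDerivAt g g' x) (hfx : 0 < f x) (hgx : 0 < g x) :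
    HasDerivAt (fun t => Real.log (f t ^ α / (f t ^ α + g t ^ α)))
      (α * g x ^ α / (f x ^ α + g x ^ α) * (f' / f x - g' / g x)) x := by
  have hfα : 0 < f x ^ α := Real.rpow_pos_of_pos hfx α
  have hgα : 0 < g x ^ α := Real.rpow_pos_of_pos hgx α
  have hquot := (hf.rpow_const (p := α) (Or.inl hfx.ne')).fun_div
    ((hf.rpow_const (Or.inl hfx.ne')).fun_add (hg.rpow_const (p := α) (Or.inl hgx.ne')))
    (add_pos hfα hgα).ne'
  convert hquot.log (div_pos hfα (add_pos hfα hgα)).ne' using 1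
  rw [Real.rpow_sub_one hfx.ne', Real.rpow_sub_one hgx.ne']
  field_simp
  ring

theorem sum_prod_mul_single_div_sub_single_div {Y 𝕜 : Type*} [Fintype Y] [DecidableEq Y]
    [Field 𝕜] (w : Y × Y → 𝕜) (c : Y → 𝕜) (y : Y) :
    ∑ p : Y × Y, w p * ((Pi.single y 1 : Y → 𝕜) p.1 / c p.1 - (Pi.single y 1 : Y → 𝕜) p.2 / c p.2) =
      ∑ z, (w (y, z) - w (z, y)) / c y := by
  simp only [Fintype.sum_prod_type, mul_sub, sum_sub_distrib, Pi.single_apply, ite_div,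
    one_div, zero_div, mul_ite, mul_zero, sum_ite_irrel, sum_const_zero, sum_ite_eq', mem_univ,
    if_true]
  simp only [div_eq_mul_inv, sub_mul, sum_sub_distrib]

theorem spo_weighted_loss_partial_deriv_general (Y : Type*) [Fintype Y]
    [DecidableEq Y] (α : ℝ) (hα : 0 < α) (D μ : Y × Y → ℝ)
    (L : (Y → ℝ) → ℝ)
    (hL : ∀ p : Y → ℝ, L p = -(1 / α) *
      ∑ yy : Y × Y, D yy * μ yy *
        Real.log ((p yy.1) ^ α / ((p yy.1) ^ α + (p yy.2) ^ α)))
    (π : Y → ℝ) (hπ : ∀ y, 0 < π y) (y : Y) :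
    HasDerivAt (fun t : ℝ => L (Function.update π y t))
      (-(1 / π y) * ∑ y',
        (D (y, y') * μ (y, y') * (π y') ^ α - D (y', y) * μ (y', y) * (π y) ^ α) /
          ((π y) ^ α + (π y') ^ α))
      (π y) := by
  have hcoord : ∀ z, HasDerivAt (fun t => Function.update π y t z) ((Pi.single y 1 : Y → ℝ) z)
      (π y) :=
    hasDerivAt_pi.1 (hasDerivAt_update π y (π y))
  let w : Y × Y → ℝ := fun p => D p * μ p * (α * π p.2 ^ α / (π p.1 ^ α + π p.2 ^ α))
  have hterm : ∀ p : Y × Y, HasDerivAt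
      (fun t => D p * μ p * Real.log (Function.update π y t p.1 ^ α /
        (Function.update π y t p.1 ^ α + Function.update π y t p.2 ^ α)))
      (w p * ((Pi.single y 1 : Y → ℝ) p.1 / π p.1 - (Pi.single y 1 : Y → ℝ) p.2 / π p.2))
      (π y) := by
    intro p
    have h := (hcoord p.1).log_rpow_div_rpow_add_rpow α (hcoord p.2)
      (by simpa using hπ p.1) (by simpa using hπ p.2)
    rw [Function.update_eq_self] at h
    exact (h.const_mul (D p * μ p)).congr_deriv (by ring)
  have hsum := (HasDerivAt.fun_sum (u := univ) fun p _ => hterm p).const_mul (-(1 / α))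
  rw [sum_prod_mul_single_div_sub_single_div] at hsum
  simp_rw [hL]
  refine hsum.congr_deriv ?_
  rw [mul_sum, mul_sum]
  refine sum_congr rfl fun z _ => ?_
  have hα₀ : α ≠ 0 := hα.ne'
  have hy := hπ y
  have hz := hπ z
  simp only [w, add_comm (π z ^ α)]
  field_simp

/-- Closed-form gradient of the weighted SPO pairwise preference loss
`L p = -(1/α) * ∑ (y₁,y₂), D (y₁,y₂) * μ (y₁,y₂) * log (p y₁ ^ α / (p y₁ ^ α + p y₂ ^ α))`
in the tabular model: its partial derivative with respect to the coordinate `π y`,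
at a point `π` with strictly positive values, equals
`-(1 / π y) * ∑ y', (D (y,y') * μ (y,y') * π y' ^ α - D (y',y) * μ (y',y) * π y ^ α)
  / (π y ^ α + π y' ^ α)`. -/
theorem spo_weighted_loss_partial_deriv (Y : Type*) [Fintype Y] [Nonempty Y]
    [DecidableEq Y] (α : ℝ) (hα : 0 < α) (D μ : Y × Y → ℝ)
    (L : (Y → ℝ) → ℝ)
    (hL : ∀ p : Y → ℝ, L p = -(1 / α) *
      ∑ yy : Y × Y, D yy * μ yy *
        Real.log ((p yy.1) ^ α / ((p yy.1) ^ α + (p yy.2) ^ α)))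
    (π : Y → ℝ) (hπ : ∀ y, 0 < π y) (y : Y) :
    HasDerivAt (fun t : ℝ => L (Function.update π y t))
      (-(1 / π y) * ∑ y',
        (D (y, y') * μ (y, y') * (π y') ^ α - D (y', y) * μ (y', y) * (π y) ^ α) /
          ((π y) ^ α + (π y') ^ α))
      (π y) :=
  spo_weighted_loss_partial_deriv_general Y α hα D μ L hL π hπ y
end
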